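/- arXiv:1609.05007 — 8 statements merged into one kernel-verified Lean document; each statement's English description precedes it below -/
import Mathlib

section
/- Fix an integer r ≥ 2, rationals q_1,…,q_r ∈ (0,1) with q_1+⋯+q_r = 1, a real A > 0 and a real ε with 0 < ε < 1/6. Then there exist C > 0 and N₀ ∈ ℕ such that for every N ≥ N₀, every M ∈ ℕ and K : Fin r → ℕ with K_i = q_i·M for every i, and every n : Fin r → ℕ with ∑_i n_i = N such that |n_i − N·q_i| > A·N^{2/3−ε} for at least one i, one has P^D(n|K) ≤ C·√N·exp(−A²·N^{1/3−2ε}). -/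
open Finset

/-- The classical (distinguishable-particle) counting probability
`P^D(n|K) = (N! / ∏ᵢ nᵢ!) ⬝ ∏ᵢ (Kᵢ/M)^{nᵢ}` with `M = ∑ᵢ Kᵢ` and `N = ∑ᵢ nᵢ`. -/
noncomputable def PD {r : ℕ} (M : ℕ) (n K : Fin r → ℕ) : ℝ :=
  ((∑ i, n i).factorial : ℝ) / (∏ i, ((n i).factorial : ℝ)) *
    ∏ i, ((K i : ℝ) / (M : ℝ)) ^ (n i)


open Real in

private lemma log_ge_aux {a b : ℝ} (ha : 0 < a) (hb : 0 < b) :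
    (a - b)/a ≤ Real.log a - Real.log b := by
  have h := Real.log_le_sub_one_of_pos (div_pos hb ha)
  rw [Real.log_div (ne_of_gt hb) (ne_of_gt ha)] at h
  have : b/a - 1 = -((a-b)/a) := by field_simp; ring
  linarith [this ▸ h]

/-- Pinsker-type: `(x-p)^2 ≤ KL(x‖p)` for `x, p ∈ (0,1)`. -/
private lemma kl_ge_sq {p x : ℝ} (hp0 : 0 < p) (hp1 : p < 1) (hx0 : 0 < x) (hx1 : x < 1) :
    (x - p)^2 ≤ x * Real.log (x/p) + (1-x) * Real.log ((1-x)/(1-p)) := by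
  set F : ℝ → ℝ := fun y => y * Real.log y - y * Real.log p
      + (1-y) * Real.log (1-y) - (1-y) * Real.log (1-p) - (y-p)^2 with hF
  set G : ℝ → ℝ := fun y => Real.log y - Real.log p - Real.log (1-y) + Real.log (1-p)
      - 2*(y-p) with hG
  have hderiv : ∀ y ∈ Set.Ioo (0:ℝ) 1, HasDerivAt F (G y) y := by
    intro y hy
    obtain ⟨hy0, hy1⟩ := hy
    have h1 : HasDerivAt (fun y : ℝ => y * Real.log y) (Real.log y + 1) y :=
      Real.hasDerivAt_mul_log (ne_of_gt hy0)
    have h2 : HasDerivAt (fun y : ℝ => y * Real.log p) (Real.log p) y := by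
      simpa using (hasDerivAt_id y).mul_const (Real.log p)
    have h3 : HasDerivAt (fun y : ℝ => (1-y) * Real.log (1-y)) (-(Real.log (1-y) + 1)) y := by
      have hinner : HasDerivAt (fun y : ℝ => 1 - y) (-1) y := by
        simpa using (hasDerivAt_id y).const_sub 1
      have houter : HasDerivAt (fun u : ℝ => u * Real.log u) (Real.log (1-y) + 1) (1-y) :=
        Real.hasDerivAt_mul_log (by linarith)
      exact (houter.comp y hinner).congr_deriv (by ring)
    have h4 : HasDerivAt (fun y : ℝ => (1-y) * Real.log (1-p)) (-Real.log (1-p)) y := by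
      simpa using ((hasDerivAt_id y).const_sub 1).mul_const (Real.log (1-p))
    have h5 : HasDerivAt (fun y : ℝ => (y-p)^2) (2*(y-p)) y := by
      have := ((hasDerivAt_id y).sub_const p).fun_pow 2
      simpa using this
    have := (((h1.sub h2).add h3).sub h4).sub h5
    exact this.congr_deriv (by simp only [hG]; ring)
  have hGpos : ∀ y ∈ Set.Ioo (0:ℝ) 1, p ≤ y → 0 ≤ G y := by
    intro y hy hpy
    obtain ⟨hy0, hy1⟩ := hy
    have k1 : (y - p)/y ≤ Real.log y - Real.log p := log_ge_aux hy0 hp0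
    have k2 : ((1-p) - (1-y))/(1-p) ≤ Real.log (1-p) - Real.log (1-y) :=
      log_ge_aux (by linarith) (by linarith)
    have a1 : y - p ≤ Real.log y - Real.log p := by
      have : y - p ≤ (y-p)/y := by
        rw [le_div_iff₀ hy0]; nlinarith
      linarith
    have a2 : y - p ≤ Real.log (1-p) - Real.log (1-y) := by
      have : y - p ≤ ((1-p)-(1-y))/(1-p) := by
        rw [le_div_iff₀ (by linarith : (0:ℝ) < 1-p)]; nlinarith
      linarith
    simp only [hG]; linarith
  have hGneg : ∀ y ∈ Set.Ioo (0:ℝ) 1, y ≤ p → G y ≤ 0 := by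
    intro y hy hyp
    obtain ⟨hy0, hy1⟩ := hy
    have k1 : (p - y)/p ≤ Real.log p - Real.log y := log_ge_aux hp0 hy0
    have k2 : ((1-y) - (1-p))/(1-y) ≤ Real.log (1-y) - Real.log (1-p) :=
      log_ge_aux (by linarith) (by linarith)
    have a1 : p - y ≤ Real.log p - Real.log y := by
      have : p - y ≤ (p-y)/p := by
        rw [le_div_iff₀ hp0]; nlinarith
      linarith
    have a2 : p - y ≤ Real.log (1-y) - Real.log (1-p) := by
      have : p - y ≤ ((1-y)-(1-p))/(1-y) := by
        rw [le_div_iff₀ (by linarith : (0:ℝ) < 1-y)]; nlinarith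
      linarith
    simp only [hG]; linarith
  have hFp : F p = 0 := by simp only [hF]; ring
  have hFx : 0 ≤ F x := by
    rcases lt_trichotomy x p with hxp | hxp | hxp
    · -- MVT on [x, p]
      have hcont : ContinuousOn F (Set.Icc x p) := by
        intro y hy
        exact (hderiv y ⟨lt_of_lt_of_le hx0 hy.1, lt_of_le_of_lt hy.2 hp1⟩).continuousAt.continuousWithinAt
      obtain ⟨c, hc, hceq⟩ := exists_hasDerivAt_eq_slope F G hxp hcont
        (fun y hy => hderiv y ⟨lt_trans hx0 hy.1, lt_trans hy.2 hp1⟩)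
      have hcI : c ∈ Set.Ioo (0:ℝ) 1 := ⟨lt_trans hx0 hc.1, lt_trans hc.2 hp1⟩
      have := hGneg c hcI (le_of_lt hc.2)
      have hpx : 0 < p - x := by linarith
      have : (F p - F x)/(p - x) ≤ 0 := hceq ▸ this
      rw [div_nonpos_iff] at this
      rcases this with ⟨h, _⟩ | ⟨_, h⟩
      · linarith [hFp ▸ h]
      · linarith
    · rw [hxp, hFp]
    · -- MVT on [p, x]
      have hcont : ContinuousOn F (Set.Icc p x) := by
        intro y hy
        exact (hderiv y ⟨lt_of_lt_of_le hp0 hy.1, lt_of_le_of_lt hy.2 hx1⟩).continuousAt.continuousWithinAt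
      obtain ⟨c, hc, hceq⟩ := exists_hasDerivAt_eq_slope F G hxp hcont
        (fun y hy => hderiv y ⟨lt_trans hp0 hy.1, lt_trans hy.2 hx1⟩)
      have hcI : c ∈ Set.Ioo (0:ℝ) 1 := ⟨lt_trans hp0 hc.1, lt_trans hc.2 hx1⟩
      have := hGpos c hcI (le_of_lt hc.1)
      have hpx : 0 < x - p := by linarith
      have : 0 ≤ (F x - F p)/(x - p) := hceq ▸ this
      rw [div_nonneg_iff] at this
      rcases this with ⟨h, _⟩ | ⟨_, h⟩
      · linarith [hFp ▸ h]
      · linarith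
  have e1 : Real.log (x/p) = Real.log x - Real.log p :=
    Real.log_div (ne_of_gt hx0) (ne_of_gt hp0)
  have e2 : Real.log ((1-x)/(1-p)) = Real.log (1-x) - Real.log (1-p) :=
    Real.log_div (by linarith) (by linarith)
  rw [e1, e2]
  simp only [hF] at hFx
  nlinarith [hFx]


/-- single binomial term bound -/
private lemma choose_term_le {a b : ℝ} (ha : 0 ≤ a) (hb : 0 ≤ b) {n k : ℕ} (hk : k ≤ n) :
    (n.choose k : ℝ) * a^k * b^(n-k) ≤ (a+b)^n := by
  have h := add_pow a b n
  have hmem : k ∈ Finset.range (n+1) := Finset.mem_range.mpr (Nat.lt_succ_of_le hk)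
  calc (n.choose k : ℝ) * a^k * b^(n-k) = a^k * b^(n-k) * (n.choose k : ℝ) := by ring
    _ ≤ ∑ j ∈ Finset.range (n+1), a^j * b^(n-j) * (n.choose j : ℝ) := by
        apply Finset.single_le_sum (f := fun j => a^j * b^(n-j) * (n.choose j : ℝ)) _ hmem
        intro j _
        positivity
    _ = (a+b)^n := h.symm

/-- multinomial term bound -/
private lemma multinomial_term_le {ι : Type*} [DecidableEq ι] (s : Finset ι) (m : ι → ℕ)
    (f : ι → ℝ) (hf : ∀ j, 0 ≤ f j) :
    (Nat.multinomial s m : ℝ) * ∏ j ∈ s, f j ^ m j ≤ (∑ j ∈ s, f j) ^ (∑ j ∈ s, m j) := by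
  induction s using Finset.induction_on with
  | empty => simp
  | insert a s ha ih =>
    rw [Nat.multinomial_insert ha, Finset.prod_insert ha, Finset.sum_insert ha,
      Finset.sum_insert ha]
    push_cast
    have hsum : 0 ≤ ∑ j ∈ s, f j := Finset.sum_nonneg fun j _ => hf j
    calc ((m a + ∑ i ∈ s, m i).choose (m a) : ℝ) * (Nat.multinomial s m : ℝ)
          * (f a ^ m a * ∏ j ∈ s, f j ^ m j)
        = ((m a + ∑ i ∈ s, m i).choose (m a) : ℝ) * f a ^ m a
          * ((Nat.multinomial s m : ℝ) * ∏ j ∈ s, f j ^ m j) := by ring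
      _ ≤ ((m a + ∑ i ∈ s, m i).choose (m a) : ℝ) * f a ^ m a * (∑ j ∈ s, f j) ^ (∑ j ∈ s, m j) := by
          exact mul_le_mul_of_nonneg_left ih
            (mul_nonneg (Nat.cast_nonneg _) (pow_nonneg (hf a) _))
      _ ≤ (f a + ∑ j ∈ s, f j) ^ (m a + ∑ j ∈ s, m j) := by
          have := choose_term_le (hf a) hsum (n := m a + ∑ j ∈ s, m j) (k := m a)
            (Nat.le_add_right _ _)
          simpa using this


private lemma one_sub_le_exp_neg_sq {p : ℝ} (hp0 : 0 ≤ p) (hp1 : p ≤ 1) :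
    1 - p ≤ Real.exp (-p^2) := by
  have h1 : 1 - p ≤ Real.exp (-p) := by
    have := Real.add_one_le_exp (-p); linarith
  have h2 : Real.exp (-p) ≤ Real.exp (-p^2) := by
    apply Real.exp_le_exp.mpr; nlinarith
  linarith

/-- Chernoff-type point bound for the binomial distribution. -/
private lemma binom_point_le {p : ℝ} (hp0 : 0 < p) (hp1 : p < 1) {N k : ℕ}
    (hN : 0 < N) (hk : k ≤ N) :
    (N.choose k : ℝ) * p^k * (1-p)^(N-k) ≤ Real.exp (-(((k:ℝ) - N*p)^2) / N) := by
  have hNR : (0:ℝ) < N := Nat.cast_pos.mpr hN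
  rcases Nat.eq_zero_or_pos k with rfl | hk0
  · simp only [Nat.choose_zero_right, Nat.cast_one, pow_zero, one_mul, Nat.sub_zero,
      Nat.cast_zero]
    have e : -(((0:ℝ) - N*p)^2) / N = N * (-p^2) := by field_simp; ring
    rw [e, Real.exp_nat_mul]
    exact pow_le_pow_left₀ (by linarith) (one_sub_le_exp_neg_sq (le_of_lt hp0) (le_of_lt hp1)) N
  rcases eq_or_lt_of_le hk with rfl | hklt
  · simp only [Nat.choose_self, Nat.cast_one, one_mul, Nat.sub_self, pow_zero, mul_one]
    have e : -(((k:ℝ) - k*p)^2) / k = k * (-(1-p)^2) := by field_simp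
    rw [e, Real.exp_nat_mul]
    apply pow_le_pow_left₀ (le_of_lt hp0)
    have := one_sub_le_exp_neg_sq (by linarith : (0:ℝ) ≤ 1-p) (by linarith)
    simpa using this
  -- main case 0 < k < N
  set x : ℝ := (k:ℝ)/N with hxdef
  have hx0 : 0 < x := div_pos (Nat.cast_pos.mpr hk0) hNR
  have hx1 : x < 1 := (div_lt_one hNR).mpr (Nat.cast_lt.mpr hklt)
  have h1x : (0:ℝ) < 1 - x := by linarith
  have step1 : (N.choose k : ℝ) * p^k * (1-p)^(N-k)
      ≤ (p/x)^k * ((1-p)/(1-x))^(N-k) := by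
    have hb : (N.choose k : ℝ) * x^k * (1-x)^(N-k) ≤ 1 := by
      have := choose_term_le (le_of_lt hx0) (le_of_lt h1x) hk
      simpa using this
    have ep : p^k = x^k * (p/x)^k := by
      rw [← mul_pow]; congr 1; field_simp
    have eq' : (1-p)^(N-k) = (1-x)^(N-k) * ((1-p)/(1-x))^(N-k) := by
      rw [← mul_pow]; congr 1; field_simp
    calc (N.choose k : ℝ) * p^k * (1-p)^(N-k)
        = ((N.choose k : ℝ) * x^k * (1-x)^(N-k)) * ((p/x)^k * ((1-p)/(1-x))^(N-k)) := by
          rw [ep, eq']; ring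
      _ ≤ 1 * ((p/x)^k * ((1-p)/(1-x))^(N-k)) := by
          exact mul_le_mul_of_nonneg_right hb
            (mul_nonneg (pow_nonneg (div_nonneg hp0.le hx0.le) _)
              (pow_nonneg (div_nonneg (by linarith) h1x.le) _))
      _ = (p/x)^k * ((1-p)/(1-x))^(N-k) := one_mul _
  have step2 : (p/x)^k * ((1-p)/(1-x))^(N-k)
      = Real.exp ((k:ℝ) * Real.log (p/x) + ((N:ℝ)-k) * Real.log ((1-p)/(1-x))) := by
    rw [Real.exp_add]
    have hc : ((N:ℝ) - k) = ((N - k : ℕ) : ℝ) := by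
      rw [Nat.cast_sub hk]
    rw [hc]
    rw [Real.exp_nat_mul, Real.exp_nat_mul, Real.exp_log (div_pos hp0 hx0),
      Real.exp_log (div_pos (by linarith) h1x)]
  have step3 : (k:ℝ) * Real.log (p/x) + ((N:ℝ)-k) * Real.log ((1-p)/(1-x))
      ≤ -(((k:ℝ) - N*p)^2) / N := by
    have hkl := kl_ge_sq hp0 hp1 hx0 hx1
    have l1 : Real.log (p/x) = -Real.log (x/p) := by
      rw [show p/x = (x/p)⁻¹ by rw [inv_div], Real.log_inv]
    have l2 : Real.log ((1-p)/(1-x)) = -Real.log ((1-x)/(1-p)) := by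
      rw [show (1-p)/(1-x) = ((1-x)/(1-p))⁻¹ by rw [inv_div], Real.log_inv]
    have ek : (k:ℝ) = N * x := by rw [hxdef]; field_simp
    have ek2 : (N:ℝ) - k = N * (1-x) := by rw [ek]; ring
    have esq : -(((k:ℝ) - N*p)^2) / N = -(N * (x-p)^2) := by
      rw [ek]; field_simp
    rw [l1, l2, esq, ek2, ek]
    have h := mul_le_mul_of_nonneg_left hkl hNR.le
    nlinarith [h]
  calc (N.choose k : ℝ) * p^k * (1-p)^(N-k) ≤ (p/x)^k * ((1-p)/(1-x))^(N-k) := step1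
    _ = Real.exp _ := step2
    _ ≤ Real.exp (-(((k:ℝ) - N*p)^2) / N) := Real.exp_le_exp.mpr step3

/-- Tail bound for distinguishable particles: any count vector violating the
central-region condition `|nᵢ - N qᵢ| ≤ A N^(2/3-ε)` for some `i` has
probability at most `C √N exp(-A² N^(1/3-2ε))`. -/
theorem tail_bound_distinguishable
    (r : ℕ) (hr : 2 ≤ r) (q : Fin r → ℚ)
    (hq0 : ∀ i, 0 < q i) (hq1 : ∀ i, q i < 1) (hqsum : ∑ i, q i = 1)
    (A ε : ℝ) (hA : 0 < A) (hε0 : 0 < ε) (hε1 : ε < 1 / 6) :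
    ∃ C > 0, ∃ N₀ : ℕ, ∀ N : ℕ, N₀ ≤ N → ∀ M : ℕ, ∀ K : Fin r → ℕ,
      (∀ i, (K i : ℚ) = q i * M) →
      ∀ n : Fin r → ℕ, ∑ i, n i = N →
      (∃ i, A * (N : ℝ) ^ ((2 : ℝ) / 3 - ε) < |(n i : ℝ) - (N : ℝ) * (q i : ℝ)|) →
      PD M n K ≤ C * Real.sqrt N * Real.exp (-(A ^ 2) * (N : ℝ) ^ ((1 : ℝ) / 3 - 2 * ε)) := by
  refine ⟨1, one_pos, 1, ?_⟩
  intro N hN M K hK n hsum hdev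
  obtain ⟨i, hi⟩ := hdev
  have hN0 : 0 < N := hN
  have hNR : (0:ℝ) < N := Nat.cast_pos.mpr hN0
  have hsqrt : (1:ℝ) ≤ Real.sqrt N := Real.one_le_sqrt.mpr (by exact_mod_cast hN)
  have hexp0 : 0 < Real.exp (-(A ^ 2) * (N : ℝ) ^ ((1 : ℝ) / 3 - 2 * ε)) := Real.exp_pos _
  rcases Nat.eq_zero_or_pos M with rfl | hM
  · -- M = 0 : all K i = 0, PD = 0
    have hj : ∃ j, n j ≠ 0 := by
      by_contra h
      push_neg at h
      have : ∑ j, n j = 0 := Finset.sum_eq_zero fun j _ => h j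
      omega
    obtain ⟨j, hj⟩ := hj
    have hKj : K j = 0 := by
      have := hK j
      simp at this
      exact_mod_cast this
    have : PD 0 n K = 0 := by
      unfold PD
      have : ∏ l, ((K l : ℝ) / ((0:ℕ) : ℝ)) ^ (n l) = 0 := by
        apply Finset.prod_eq_zero (Finset.mem_univ j)
        rw [hKj]
        simp [zero_pow hj]
      rw [this, mul_zero]
    rw [this]
    positivity
  -- M > 0
  have hMR : (0:ℝ) < M := Nat.cast_pos.mpr hM
  have hqK : ∀ j, (K j : ℝ) / M = (q j : ℝ) := by
    intro j
    have := hK j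
    have h2 : (K j : ℝ) = (q j : ℝ) * M := by exact_mod_cast congrArg (Rat.cast (K := ℝ)) this
    rw [h2]
    field_simp
  set p : ℝ := (q i : ℝ) with hpdef
  have hp0 : 0 < p := by rw [hpdef]; exact_mod_cast hq0 i
  have hp1 : p < 1 := by rw [hpdef]; exact_mod_cast hq1 i
  -- rewrite PD
  have hPD : PD M n K = (Nat.multinomial univ n : ℝ) * ∏ j, (q j : ℝ) ^ (n j) := by
    unfold PD
    have hfac : (∏ j, ((n j).factorial : ℝ)) ≠ 0 := by
      apply Finset.prod_ne_zero_iff.mpr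
      intro j _
      exact_mod_cast (n j).factorial_ne_zero
    have hspec : ((∏ j, (n j).factorial : ℕ) : ℝ) * (Nat.multinomial univ n : ℝ)
        = ((∑ j, n j).factorial : ℝ) := by
      exact_mod_cast congrArg (Nat.cast (R := ℝ)) (Nat.multinomial_spec univ n)
    push_cast at hspec
    have hdiv : ((∑ j, n j).factorial : ℝ) / (∏ j, ((n j).factorial : ℝ))
        = (Nat.multinomial univ n : ℝ) := by
      rw [← hspec]
      field_simp
    rw [hdiv]
    congr 1
    exact Finset.prod_congr rfl fun j _ => by rw [hqK j]
  -- bound by binomial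
  have hni : n i ≤ N := by
    rw [← hsum]
    exact Finset.single_le_sum (f := n) (fun j _ => Nat.zero_le _) (Finset.mem_univ i)
  have hsumerase : ∑ j ∈ univ.erase i, n j = N - n i := by
    have := Finset.sum_erase_add univ n (Finset.mem_univ i)
    omega
  have hqerase : ∑ j ∈ univ.erase i, (q j : ℝ) = 1 - p := by
    have h1 : ∑ j ∈ univ.erase i, (q j : ℝ) + (q i : ℝ) = ∑ j, (q j : ℝ) :=
      Finset.sum_erase_add univ _ (Finset.mem_univ i)
    have h2 : ∑ j, (q j : ℝ) = 1 := by
      have := congrArg (Rat.cast (K := ℝ)) hqsum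
      push_cast at this
      exact this
    rw [h2] at h1
    linarith
  have hmult : (Nat.multinomial univ n : ℝ)
      = (N.choose (n i) : ℝ) * (Nat.multinomial (univ.erase i) n : ℝ) := by
    have e : (univ : Finset (Fin r)) = insert i (univ.erase i) :=
      (Finset.insert_erase (Finset.mem_univ i)).symm
    nth_rewrite 1 [e]
    rw [Nat.multinomial_insert (Finset.notMem_erase i univ), hsumerase]
    have : n i + (N - n i) = N := by omega
    rw [this]
    push_cast
    ring
  have hstep : PD M n K ≤ (N.choose (n i) : ℝ) * p ^ (n i) * (1-p) ^ (N - n i) := by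
    rw [hPD, hmult]
    have hprod : ∏ j, (q j : ℝ) ^ (n j)
        = (q i : ℝ) ^ (n i) * ∏ j ∈ univ.erase i, (q j : ℝ) ^ (n j) :=
      (Finset.mul_prod_erase univ _ (Finset.mem_univ i)).symm
    rw [hprod]
    have hrest : (Nat.multinomial (univ.erase i) n : ℝ) * ∏ j ∈ univ.erase i, (q j : ℝ) ^ (n j)
        ≤ (1-p) ^ (N - n i) := by
      have := multinomial_term_le (univ.erase i) n (fun j => (q j : ℝ))
        (fun j => by show (0:ℝ) ≤ (q j : ℝ); exact_mod_cast (hq0 j).le)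
      rwa [hqerase, hsumerase] at this
    calc (N.choose (n i) : ℝ) * (Nat.multinomial (univ.erase i) n : ℝ)
          * ((q i : ℝ) ^ (n i) * ∏ j ∈ univ.erase i, (q j : ℝ) ^ (n j))
        = (N.choose (n i) : ℝ) * p ^ (n i)
          * ((Nat.multinomial (univ.erase i) n : ℝ) * ∏ j ∈ univ.erase i, (q j : ℝ) ^ (n j)) := by
          rw [hpdef]; ring
      _ ≤ (N.choose (n i) : ℝ) * p ^ (n i) * (1-p) ^ (N - n i) := by
          exact mul_le_mul_of_nonneg_left hrest
            (mul_nonneg (Nat.cast_nonneg _) (pow_nonneg hp0.le _))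
  have hchern := binom_point_le hp0 hp1 hN0 hni
  -- exponent comparison
  have hexpo : -((((n i):ℝ) - N*p)^2) / N ≤ -(A ^ 2) * (N : ℝ) ^ ((1 : ℝ) / 3 - 2 * ε) := by
    have hB : (0:ℝ) ≤ A * (N : ℝ) ^ ((2 : ℝ) / 3 - ε) :=
      mul_nonneg hA.le (Real.rpow_nonneg hNR.le _)
    have h1 : (A * (N : ℝ) ^ ((2 : ℝ) / 3 - ε))^2 ≤ (((n i):ℝ) - N*p)^2 := by
      have := sq_abs (((n i):ℝ) - N*p)
      nlinarith [hi, abs_nonneg (((n i):ℝ) - N*p)]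
    have hNe : (N:ℝ)^((2:ℝ)/3-ε) * (N:ℝ)^((2:ℝ)/3-ε)
        = (N:ℝ)^((1:ℝ)/3-2*ε) * (N:ℝ)^(1:ℝ) := by
      rw [← Real.rpow_add hNR, ← Real.rpow_add hNR]
      congr 1
      ring
    have h2 : (A * (N : ℝ) ^ ((2 : ℝ) / 3 - ε))^2
        = A^2 * (N : ℝ) ^ ((1 : ℝ) / 3 - 2*ε) * N := by
      calc (A * (N : ℝ) ^ ((2 : ℝ) / 3 - ε))^2
          = A^2 * ((N:ℝ)^((2:ℝ)/3-ε) * (N:ℝ)^((2:ℝ)/3-ε)) := by ring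
        _ = A^2 * ((N:ℝ)^((1:ℝ)/3-2*ε) * (N:ℝ)^(1:ℝ)) := by rw [hNe]
        _ = A^2 * (N : ℝ) ^ ((1 : ℝ) / 3 - 2*ε) * N := by rw [Real.rpow_one]; ring
    rw [neg_div, neg_mul, neg_le_neg_iff]
    rw [le_div_iff₀ hNR]
    calc A ^ 2 * (N:ℝ) ^ ((1:ℝ)/3 - 2*ε) * N = (A * (N : ℝ) ^ ((2 : ℝ) / 3 - ε))^2 := h2.symm
      _ ≤ (((n i):ℝ) - N*p)^2 := h1
  calc PD M n K ≤ (N.choose (n i) : ℝ) * p ^ (n i) * (1-p) ^ (N - n i) := hstep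
    _ ≤ Real.exp (-((((n i):ℝ) - N*p)^2) / N) := hchern
    _ ≤ Real.exp (-(A ^ 2) * (N : ℝ) ^ ((1 : ℝ) / 3 - 2 * ε)) := Real.exp_le_exp.mpr hexpo
    _ ≤ 1 * Real.sqrt N * Real.exp (-(A ^ 2) * (N : ℝ) ^ ((1 : ℝ) / 3 - 2 * ε)) := by
        rw [one_mul]
        exact le_mul_of_one_le_left hexp0.le hsqrt
end

section
/- Fix an integer r ≥ 2, rationals q_1,…,q_r ∈ (0,1) with q_1+⋯+q_r = 1, a rational α with 0 < α < 1, a real A > 0 and a real ε with 0 < ε < 1/6. Then there exist C > 0 and N₀ ∈ ℕ such that for every N ≥ N₀ and M ∈ ℕ with α·M = N, every K : Fin r → ℕ with K_i = q_i·M for every i, and every n : Fin r → ℕ with ∑_i n_i = N and n_i ≤ K_i for every i, such that |n_i − N·q_i| > A·N^{2/3−ε} for at least one i, one has P^F(n|K) ≤ C·N^{5/2}·exp(−A²·N^{1/3−2ε}/(1−α)). -/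
open Finset

/-- The fermionic counting probability
`P^F(n|K) = (N!/∏ᵢ nᵢ!) ⬝ ((M-N)!/M!) ⬝ ∏ᵢ Kᵢ!/(Kᵢ-nᵢ)!`
with `M = ∑ᵢ Kᵢ` and `N = ∑ᵢ nᵢ`, assuming `nᵢ ≤ Kᵢ`. -/
noncomputable def PF {r : ℕ} (M : ℕ) (n K : Fin r → ℕ) : ℝ :=
  ((∑ i, n i).factorial : ℝ) / (∏ i, ((n i).factorial : ℝ)) *
    (((M - (∑ i, n i)).factorial : ℝ) / (M.factorial : ℝ)) *
    ∏ i, ((K i).factorial : ℝ) / ((K i - n i).factorial : ℝ)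


lemma vanderPair (K L a b : ℕ) : K.choose a * L.choose b ≤ (K + L).choose (a + b) := by
  rw [Nat.add_choose_eq]
  exact Finset.single_le_sum (f := fun p : ℕ × ℕ => K.choose p.1 * L.choose p.2)
    (fun _ _ => Nat.zero_le _) (Finset.HasAntidiagonal.mem_antidiagonal.2 (rfl : (a,b).1 + (a,b).2 = a + b))

lemma vanderProd {ι : Type*} (s : Finset ι) (K n : ι → ℕ) :
    (∏ i ∈ s, (K i).choose (n i)) ≤ (∑ i ∈ s, K i).choose (∑ i ∈ s, n i) := by
  induction s using Finset.cons_induction with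
  | empty => simp
  | cons a s ha ih =>
      simp only [prod_cons, sum_cons]
      calc (K a).choose (n a) * ∏ i ∈ s, (K i).choose (n i)
          ≤ (K a).choose (n a) * ((∑ i ∈ s, K i).choose (∑ i ∈ s, n i)) :=
            Nat.mul_le_mul_left _ ih
        _ ≤ _ := vanderPair _ _ _ _

lemma stepEq (M N K b : ℕ) (hKM : K ≤ M) (hbK : b + 1 ≤ K) (hbN : b + 1 ≤ N)
    (hNb : N - b ≤ M - K) :
    K.choose (b+1) * (M-K).choose (N-(b+1)) * ((b+1) * (M-K+1-(N-b))) =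
      K.choose b * (M-K).choose (N-b) * ((K-b) * (N-b)) := by
  have h1 : K.choose (b+1) * (b+1) = K.choose b * (K - b) := Nat.choose_succ_right_eq K b
  have hm : N - (b+1) + 1 = N - b := by omega
  have h2 : (M-K).choose (N-b) * (N-b) = (M-K).choose (N-(b+1)) * ((M-K) - (N-(b+1))) := by
    rw [← hm]; exact Nat.choose_succ_right_eq _ _
  have hm2 : (M-K) - (N-(b+1)) = M-K+1-(N-b) := by omega
  rw [hm2] at h2
  calc K.choose (b+1) * (M-K).choose (N-(b+1)) * ((b+1) * (M-K+1-(N-b)))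
      = (K.choose (b+1) * (b+1)) * ((M-K).choose (N-(b+1)) * (M-K+1-(N-b))) := by ring
    _ = (K.choose b * (K-b)) * ((M-K).choose (N-b) * (N-b)) := by rw [h1, ← h2]
    _ = K.choose b * (M-K).choose (N-b) * ((K-b) * (N-b)) := by ring

lemma subLe {M N K b : ℕ} (hM : 0 < M) (hKM : K ≤ M) (hNM : N ≤ M) (h : N * K ≤ b * M) :
    N - b ≤ M - K := by
  have h2 : (N:ℤ) + K ≤ M + b := by
    have hM' : (0:ℤ) < M := by exact_mod_cast hM
    have h' : (N:ℤ) * K ≤ b * M := by exact_mod_cast h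
    have hKM' : (K:ℤ) ≤ M := by exact_mod_cast hKM
    have hNM' : (N:ℤ) ≤ M := by exact_mod_cast hNM
    nlinarith [mul_nonneg (sub_nonneg.2 hNM') (sub_nonneg.2 hKM')]
  have : N + K ≤ M + b := by exact_mod_cast h2
  omega

set_option maxHeartbeats 1000000 in
lemma stepBound (M N K c b : ℕ) (E₁ E₂ : ℝ) (hM : 0 < M) (hKM : K ≤ M) (hNM : N ≤ M)
    (hc : N * K ≤ c * M) (hcb : c ≤ b) (hbK : b + 1 ≤ K) (hbN : b + 1 ≤ N)
    (hE₁ : 0 < E₁) (hE₂ : 0 < E₂)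
    (hcap1 : ((b:ℝ) + 1) ≤ E₁) (hcap2 : (M:ℝ) - K - N + b + 1 ≤ E₂) :
    ((K.choose (b+1) * (M-K).choose (N-(b+1)) : ℕ) : ℝ) ≤
      ((K.choose b * (M-K).choose (N-b) : ℕ) : ℝ) *
        Real.exp (-((M:ℝ) * ((b:ℝ) - c)) / (E₁ * E₂)) := by
  have hbM : N * K ≤ b * M := le_trans hc (Nat.mul_le_mul_right _ hcb)
  have hNb : N - b ≤ M - K := subLe hM hKM hNM hbM
  have heq := stepEq M N K b hKM hbK hbN hNb
  have hMr : (0:ℝ) < M := by exact_mod_cast hM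
  have hKMr : (K:ℝ) ≤ M := by exact_mod_cast hKM
  have hNMr : (N:ℝ) ≤ M := by exact_mod_cast hNM
  have hXr : (((b+1) * (M-K+1-(N-b)) : ℕ) : ℝ) = ((b:ℝ)+1) * ((M:ℝ) - K - N + b + 1) := by
    have h1 : N - b ≤ M - K + 1 := le_trans hNb (Nat.le_succ _)
    have h2 : b ≤ N := by omega
    push_cast [h1, hKM, h2]
    ring
  have hYr : (((K-b) * (N-b) : ℕ) : ℝ) = ((K:ℝ) - b) * ((N:ℝ) - b) := by
    rw [Nat.cast_mul, Nat.cast_sub (show b ≤ K by omega), Nat.cast_sub (show b ≤ N by omega)]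
  have heqr : ((K.choose (b+1) * (M-K).choose (N-(b+1)) : ℕ) : ℝ) *
        (((b:ℝ)+1) * ((M:ℝ) - K - N + b + 1)) =
      ((K.choose b * (M-K).choose (N-b) : ℕ) : ℝ) * (((K:ℝ) - b) * ((N:ℝ) - b)) := by
    rw [← hXr, ← hYr, ← Nat.cast_mul, ← Nat.cast_mul, heq]
  have hbMr : (N:ℝ) * K ≤ (b:ℝ) * M := by exact_mod_cast hbM
  have hcMr : (N:ℝ) * K ≤ (c:ℝ) * M := by exact_mod_cast hc
  have hcbr : (c:ℝ) ≤ b := by exact_mod_cast hcb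
  have h3 : (0:ℝ) ≤ ((M:ℝ) - K) * ((M:ℝ) - N) := by nlinarith
  have hpos2 : (0:ℝ) < (M:ℝ) - K - N + b + 1 := by nlinarith
  have hX0 : (0:ℝ) < ((b:ℝ)+1) * ((M:ℝ) - K - N + b + 1) := by positivity
  set z : ℝ := ((M:ℝ) * ((b:ℝ) - c)) / (E₁ * E₂) with hz
  have hznn : 0 ≤ z := div_nonneg (by nlinarith) (by positivity)
  have hXE : ((b:ℝ)+1) * ((M:ℝ) - K - N + b + 1) ≤ E₁ * E₂ :=
    mul_le_mul hcap1 hcap2 (le_of_lt hpos2) (le_of_lt hE₁)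
  have hXz : (((b:ℝ)+1) * ((M:ℝ) - K - N + b + 1)) * z ≤ (M:ℝ) * ((b:ℝ) - c) := by
    calc (((b:ℝ)+1) * ((M:ℝ) - K - N + b + 1)) * z ≤ (E₁ * E₂) * z :=
          mul_le_mul_of_nonneg_right hXE hznn
      _ = (M:ℝ) * ((b:ℝ) - c) := by
          rw [hz, mul_comm, div_mul_cancel₀]
          positivity
  have hdiff : (M:ℝ) * ((b:ℝ) - c) ≤
      ((b:ℝ)+1) * ((M:ℝ) - K - N + b + 1) - ((K:ℝ) - b) * ((N:ℝ) - b) := by nlinarith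
  have hYX : ((K:ℝ) - b) * ((N:ℝ) - b) ≤
      (((b:ℝ)+1) * ((M:ℝ) - K - N + b + 1)) * (1 - z) := by nlinarith
  have hexp : 1 - z ≤ Real.exp (-z) := by
    have := Real.add_one_le_exp (-z); linarith
  have hF0nn : (0:ℝ) ≤ ((K.choose b * (M-K).choose (N-b) : ℕ) : ℝ) := Nat.cast_nonneg _
  have hmain : ((K.choose (b+1) * (M-K).choose (N-(b+1)) : ℕ) : ℝ) *
        (((b:ℝ)+1) * ((M:ℝ) - K - N + b + 1)) ≤
      (((K.choose b * (M-K).choose (N-b) : ℕ) : ℝ) * Real.exp (-z)) *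
        (((b:ℝ)+1) * ((M:ℝ) - K - N + b + 1)) := by
    rw [heqr]
    calc ((K.choose b * (M-K).choose (N-b) : ℕ) : ℝ) * (((K:ℝ) - b) * ((N:ℝ) - b))
        ≤ ((K.choose b * (M-K).choose (N-b) : ℕ) : ℝ) *
            ((((b:ℝ)+1) * ((M:ℝ) - K - N + b + 1)) * (1 - z)) :=
          mul_le_mul_of_nonneg_left hYX hF0nn
      _ ≤ ((K.choose b * (M-K).choose (N-b) : ℕ) : ℝ) *
            ((((b:ℝ)+1) * ((M:ℝ) - K - N + b + 1)) * Real.exp (-z)) := by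
          apply mul_le_mul_of_nonneg_left _ hF0nn
          exact mul_le_mul_of_nonneg_left hexp (le_of_lt hX0)
      _ = (((K.choose b * (M-K).choose (N-b) : ℕ) : ℝ) * Real.exp (-z)) *
            (((b:ℝ)+1) * ((M:ℝ) - K - N + b + 1)) := by ring
  have := le_of_mul_le_mul_right hmain hX0
  rw [hz] at this
  rw [neg_div]
  exact this

lemma chainBound (M N K c : ℕ) (E₁ E₂ : ℝ) (hM : 0 < M) (hKM : K ≤ M) (hNM : N ≤ M)
    (hc : N * K ≤ c * M) (hE₁ : 0 < E₁) (hE₂ : 0 < E₂) :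
    ∀ d : ℕ, c + d ≤ K → c + d ≤ N → ((c + d : ℕ) : ℝ) + 1 ≤ E₁ →
      (M : ℝ) - K - N + (c + d) + 1 ≤ E₂ →
      ((K.choose (c+d) * (M - K).choose (N - (c+d)) : ℕ) : ℝ) ≤
        (M.choose N : ℝ) * Real.exp (-((M : ℝ) * d * ((d:ℝ) - 1)) / (2 * E₁ * E₂)) := by
  intro d
  induction d with
  | zero =>
      intro hK hN _ _
      simp only [Nat.cast_zero, add_zero]
      have h0 : (-((M : ℝ) * 0 * ((0:ℝ) - 1)) / (2 * E₁ * E₂)) = 0 := by ring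
      rw [h0, Real.exp_zero, mul_one]
      have := vanderPair K (M - K) c (N - c)
      rw [(by omega : K + (M - K) = M), (by omega : c + (N - c) = N)] at this
      exact_mod_cast this
  | succ d ih =>
      intro hK hN hcap1 hcap2
      have hb : c + (d + 1) = (c + d) + 1 := by omega
      have hcap1' : ((c + d : ℕ) : ℝ) + 1 ≤ E₁ := by push_cast at hcap1 ⊢; linarith
      have hcap2' : (M : ℝ) - K - N + (c + d) + 1 ≤ E₂ := by push_cast at hcap2 ⊢; linarith
      have ihh := ih (by omega) (by omega) hcap1' hcap2'
      have hstep := stepBound M N K c (c + d) E₁ E₂ hM hKM hNM hc (by omega)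
        (by omega) (by omega) hE₁ hE₂ (by push_cast at hcap1 ⊢; linarith)
        (by push_cast at hcap2 ⊢; linarith)
      rw [hb]
      have hcd : ((c + d : ℕ) : ℝ) - (c : ℝ) = (d : ℝ) := by push_cast; ring
      rw [hcd] at hstep
      calc ((K.choose ((c+d)+1) * (M - K).choose (N - ((c+d)+1)) : ℕ) : ℝ)
          ≤ ((K.choose (c+d) * (M - K).choose (N - (c+d)) : ℕ) : ℝ) *
              Real.exp (-((M:ℝ) * d) / (E₁ * E₂)) := hstep
        _ ≤ ((M.choose N : ℝ) * Real.exp (-((M : ℝ) * d * ((d:ℝ) - 1)) / (2 * E₁ * E₂))) *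
              Real.exp (-((M:ℝ) * d) / (E₁ * E₂)) := by
            apply mul_le_mul_of_nonneg_right ihh (Real.exp_nonneg _)
        _ = (M.choose N : ℝ) * Real.exp (-((M : ℝ) * (d+1) * (((d:ℝ)+1) - 1)) / (2 * E₁ * E₂)) := by
            rw [mul_assoc, ← Real.exp_add]
            congr 1
            field_simp
            ring
        _ = (M.choose N : ℝ) * Real.exp (-((M : ℝ) * ((d:ℕ)+1 : ℕ) * ((((d:ℕ)+1 : ℕ):ℝ) - 1)) / (2 * E₁ * E₂)) := by
            push_cast; ring_nf

lemma monoBound (M N K e : ℕ) (hM : 0 < M) (hKM : K ≤ M) (hNM : N ≤ M)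
    (he : N * K ≤ e * M) :
    ∀ d : ℕ, e + d ≤ K → e + d ≤ N →
      (K.choose (e+d) * (M - K).choose (N - (e+d))) ≤
        K.choose e * (M - K).choose (N - e) := by
  intro d
  induction d with
  | zero => intro _ _; simp
  | succ d ih =>
      intro hK hN
      have ihh := ih (by omega) (by omega)
      have hb : e + (d + 1) = (e + d) + 1 := by omega
      set b := e + d with hbdef
      have hbM : N * K ≤ b * M := le_trans he (Nat.mul_le_mul_right _ (by omega))
      have hNb : N - b ≤ M - K := subLe hM hKM hNM hbM
      have heq := stepEq M N K b hKM (by omega) (by omega) hNb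
      -- Y ≤ X in ℕ via ℝ
      have hYX : (K-b) * (N-b) ≤ (b+1) * (M-K+1-(N-b)) := by
        have hMr : (0:ℝ) < M := by exact_mod_cast hM
        have hKMr : (K:ℝ) ≤ M := by exact_mod_cast hKM
        have hNMr : (N:ℝ) ≤ M := by exact_mod_cast hNM
        have hbMr : (N:ℝ) * K ≤ (b:ℝ) * M := by exact_mod_cast hbM
        have h3 : (0:ℝ) ≤ ((M:ℝ) - K) * ((M:ℝ) - N) := by nlinarith
        have hXr : (((b+1) * (M-K+1-(N-b)) : ℕ) : ℝ) = ((b:ℝ)+1) * ((M:ℝ) - K - N + b + 1) := by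
          have h1 : N - b ≤ M - K + 1 := le_trans hNb (Nat.le_succ _)
          have h2 : b ≤ N := by omega
          push_cast [h1, hKM, h2]
          ring
        have hYr : (((K-b) * (N-b) : ℕ) : ℝ) = ((K:ℝ) - b) * ((N:ℝ) - b) := by
          rw [Nat.cast_mul, Nat.cast_sub (show b ≤ K by omega), Nat.cast_sub (show b ≤ N by omega)]
        rw [← Nat.cast_le (α := ℝ), hXr, hYr]
        nlinarith
      have hXpos : 0 < (b+1) * (M-K+1-(N-b)) := by
        have : N - b ≤ M - K := hNb
        have : 0 < M - K + 1 - (N - b) := by omega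
        positivity
      have h5 : K.choose (b+1) * (M-K).choose (N-(b+1)) * ((b+1) * (M-K+1-(N-b))) ≤
          (K.choose b * (M-K).choose (N-b)) * ((b+1) * (M-K+1-(N-b))) := by
        rw [heq]
        exact Nat.mul_le_mul_left _ hYX
      have h6 : K.choose (b+1) * (M-K).choose (N-(b+1)) ≤ K.choose b * (M-K).choose (N-b) :=
        Nat.le_of_mul_le_mul_right h5 hXpos
      rw [hb]
      exact le_trans h6 ihh

set_option maxHeartbeats 1000000 in
/-- single-group tail bound above the mean -/
lemma oneBound (M N K a : ℕ) (t : ℝ) (hM : 0 < M) (hKM : K ≤ M) (hNM : N ≤ M)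
    (haK : a ≤ K) (haN : a ≤ N) (ht : 20 ≤ t)
    (hdev : (N:ℝ) * K / M + t < a) :
    ((K.choose a * (M - K).choose (N - a) : ℕ) : ℝ) ≤
      (M.choose N : ℝ) * Real.exp (-((M:ℝ) * (t - 1) * (t - 2)) /
        (2 * ((N:ℝ) * K / M + t + 2) * ((M:ℝ) - K - N + ((N:ℝ) * K / M + t + 2)))) := by
  have hMr : (0:ℝ) < M := by exact_mod_cast hM
  have hKMr : (K:ℝ) ≤ M := by exact_mod_cast hKM
  have hNMr : (N:ℝ) ≤ M := by exact_mod_cast hNM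
  set μ : ℝ := (N:ℝ) * K / M with hμ
  have hμnn : 0 ≤ μ := by positivity
  obtain ⟨c, hcM, hcr⟩ : ∃ c : ℕ, N * K ≤ c * M ∧ (c:ℝ) ≤ μ + 1 := by
    refine ⟨N * K / M + 1, ?_, ?_⟩
    · calc N * K = M * (N * K / M) + N * K % M := (Nat.div_add_mod _ _).symm
        _ ≤ M * (N * K / M) + M := by
            have h2 := Nat.mod_lt (N * K) hM
            omega
        _ = (N * K / M + 1) * M := by ring
    · rw [hμ]
      push_cast
      have := Nat.cast_div_le (m := N * K) (n := M) (α := ℝ)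
      push_cast at this
      linarith
  have htnn : (0:ℝ) ≤ t := by linarith
  obtain ⟨d, hdt, hdt'⟩ : ∃ d : ℕ, t - 1 < (d:ℝ) ∧ (d:ℝ) ≤ t := by
    refine ⟨⌊t⌋₊, ?_, Nat.floor_le htnn⟩
    have := Nat.lt_floor_add_one t
    linarith
  have hea : c + d ≤ a := by
    have her : ((c + d : ℕ):ℝ) < ((a + 1 : ℕ):ℝ) := by
      push_cast
      linarith
    exact_mod_cast Nat.lt_add_one_iff.1 (by exact_mod_cast her)
  have hcap1 : ((c + d : ℕ):ℝ) + 1 ≤ μ + t + 2 := by push_cast; linarith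
  have hcap2 : (M:ℝ) - K - N + ((c + d : ℕ):ℝ) + 1 ≤ (M:ℝ) - K - N + (μ + t + 2) := by
    push_cast; linarith
  have h3 : (0:ℝ) ≤ ((M:ℝ) - K) * ((M:ℝ) - N) := by nlinarith
  have h4 : (M:ℝ) - K - N + μ = ((M:ℝ) - K) * ((M:ℝ) - N) / M := by
    rw [hμ]; field_simp; ring
  have hE₂pos : (0:ℝ) < (M:ℝ) - K - N + (μ + t + 2) := by
    have h5 : (0:ℝ) ≤ ((M:ℝ) - K) * ((M:ℝ) - N) / M := div_nonneg h3 (le_of_lt hMr)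
    linarith
  have hE₁pos : (0:ℝ) < μ + t + 2 := by linarith
  have hchain := chainBound M N K c (μ + t + 2) ((M:ℝ) - K - N + (μ + t + 2)) hM hKM hNM hcM
    hE₁pos hE₂pos d (by omega) (by omega) hcap1 (by push_cast at hcap2 ⊢; linarith)
  have hmono := monoBound M N K (c + d) hM hKM hNM
    (le_trans hcM (Nat.mul_le_mul_right _ (by omega))) (a - (c + d)) (by omega) (by omega)
  rw [(by omega : (c + d) + (a - (c + d)) = a)] at hmono
  have hmonor : ((K.choose a * (M - K).choose (N - a) : ℕ) : ℝ) ≤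
      ((K.choose (c + d) * (M - K).choose (N - (c + d)) : ℕ) : ℝ) := by exact_mod_cast hmono
  refine le_trans (le_trans hmonor hchain) ?_
  apply mul_le_mul_of_nonneg_left _ (Nat.cast_nonneg _)
  rw [Real.exp_le_exp]
  rw [div_le_div_iff₀ (by positivity) (by positivity)]
  have hdd : (t - 1) * (t - 2) ≤ (d:ℝ) * ((d:ℝ) - 1) := by
    have h1 : t - 1 ≤ (d:ℝ) := le_of_lt hdt
    have h2 : t - 2 ≤ (d:ℝ) - 1 := by linarith
    have h3' : (0:ℝ) ≤ t - 2 := by linarith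
    nlinarith
  have hMnn : (0:ℝ) ≤ (M:ℝ) := le_of_lt hMr
  nlinarith [mul_le_mul_of_nonneg_left hdd hMnn,
    mul_pos (mul_pos (by norm_num : (0:ℝ) < 2) hE₁pos) hE₂pos]

set_option maxHeartbeats 1000000 in
lemma numericBound (Mr Nr t u v αr : ℝ) (hα0 : 0 < αr) (hα1 : αr < 1) (hMN : αr * Mr = Nr)
    (hN : 0 < Nr) (ht : 20 ≤ t) (hsm : t + 2 ≤ (1 - αr) * Nr / 100)
    (hu : 0 ≤ u) (hv : 0 ≤ v) (huv : u * v ≤ Nr * (Mr - Nr) / 4) (hsum : u + v ≤ Mr) :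
    t^2 / ((1 - αr) * Nr) ≤ Mr * (t - 1) * (t - 2) / (2 * (u + t + 2) * (v + t + 2)) := by
  have hM0 : 0 < Mr := by nlinarith
  have hNM : Nr < Mr := by nlinarith
  have h1 : Mr - Nr = (1 - αr) * Mr := by nlinarith
  have htp : (0:ℝ) < t + 2 := by linarith
  have hd1 : (0:ℝ) < (1 - αr) * Nr := by nlinarith
  have hd2 : (0:ℝ) < 2 * (u + t + 2) * (v + t + 2) := by positivity
  rw [div_le_div_iff₀ hd1 hd2]
  have hle : t + 2 ≤ Nr := by nlinarith
  have hle2 : t + 2 ≤ Mr := by linarith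
  have hA : (t + 2)^2 ≤ Mr * (t + 2) := by nlinarith
  have hB : (u + v) * (t + 2) ≤ Mr * (t + 2) := by nlinarith
  have hC : Mr * (t + 2) ≤ Mr * ((1 - αr) * Nr / 100) := by nlinarith
  have key : 2 * (u + t + 2) * (v + t + 2) ≤ (27/50) * ((1 - αr) * Nr * Mr) := by nlinarith
  have hD : (17/20) * t^2 ≤ (t - 1) * (t - 2) := by nlinarith
  have ht2 : (0:ℝ) ≤ t^2 := sq_nonneg t
  have hF : (0:ℝ) ≤ (1 - αr) * Nr * Mr := by positivity
  calc t^2 * (2 * (u + t + 2) * (v + t + 2)) ≤ t^2 * ((27/50) * ((1 - αr) * Nr * Mr)) :=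
        mul_le_mul_of_nonneg_left key ht2
    _ ≤ ((17/20) * t^2) * ((1 - αr) * Nr * Mr) := by nlinarith
    _ ≤ ((t - 1) * (t - 2)) * ((1 - αr) * Nr * Mr) := mul_le_mul_of_nonneg_right hD hF
    _ = Mr * (t - 1) * (t - 2) * ((1 - αr) * Nr) := by ring

lemma eventuallyCond (A ε c : ℝ) (hA : 0 < A) (hε0 : 0 < ε) (hε1 : ε < 1/6) (hc : 0 < c) :
    ∀ᶠ N : ℕ in Filter.atTop, 1 ≤ N ∧ 20 ≤ A * (N:ℝ)^((2:ℝ)/3 - ε) ∧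
      A * (N:ℝ)^((2:ℝ)/3 - ε) + 2 ≤ c * N := by
  have hp : 0 < (2:ℝ)/3 - ε := by linarith
  have h1 : Filter.Tendsto (fun N : ℕ => A * (N:ℝ)^((2:ℝ)/3 - ε)) Filter.atTop Filter.atTop :=
    Filter.Tendsto.const_mul_atTop hA
      ((tendsto_rpow_atTop hp).comp tendsto_natCast_atTop_atTop)
  have e2 := h1.eventually_ge_atTop 20
  have h3 : Filter.Tendsto (fun N : ℕ => ((N:ℝ))^(((2:ℝ)/3 - ε) - 1)) Filter.atTop (nhds 0) := by
    have h := (tendsto_rpow_neg_atTop (y := 1 - ((2:ℝ)/3 - ε)) (by linarith)).comp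
      (tendsto_natCast_atTop_atTop (R := ℝ))
    have heq : (fun N : ℕ => ((N:ℝ))^(((2:ℝ)/3 - ε) - 1)) =
        (fun x : ℝ => x ^ (-(1 - ((2:ℝ)/3 - ε)))) ∘ (Nat.cast : ℕ → ℝ) := by
      funext N
      show ((N:ℝ))^(((2:ℝ)/3 - ε) - 1) = ((N:ℝ)) ^ (-(1 - ((2:ℝ)/3 - ε)))
      congr 1
      ring
    rw [heq]
    exact h
  have e3 := h3.eventually_lt_const (show (0:ℝ) < c / (2 * A) by positivity)
  have h4 : Filter.Tendsto (fun N : ℕ => c / 2 * (N:ℝ)) Filter.atTop Filter.atTop :=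
    Filter.Tendsto.const_mul_atTop (by positivity) (tendsto_natCast_atTop_atTop (R := ℝ))
  have e4 := h4.eventually_ge_atTop 2
  filter_upwards [Filter.eventually_ge_atTop 1, e2, e3, e4] with N hN1 hN2 hN3 hN4
  refine ⟨hN1, hN2, ?_⟩
  have hN0 : (0:ℝ) < N := by exact_mod_cast hN1
  have hrw : (N:ℝ)^((2:ℝ)/3 - ε) = (N:ℝ)^(((2:ℝ)/3 - ε) - 1) * N := by
    rw [show (2:ℝ)/3 - ε = (((2:ℝ)/3 - ε) - 1) + 1 by ring, Real.rpow_add_one (ne_of_gt hN0)]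
    norm_num
  rw [hrw]
  have h5 : (N:ℝ)^(((2:ℝ)/3 - ε) - 1) * (N:ℝ) ≤ c / (2*A) * N :=
    mul_le_mul_of_nonneg_right (le_of_lt hN3) (le_of_lt hN0)
  have h6 : A * ((N:ℝ)^(((2:ℝ)/3 - ε) - 1) * N) ≤ A * (c / (2*A) * N) :=
    mul_le_mul_of_nonneg_left h5 (le_of_lt hA)
  have h7 : A * (c / (2*A) * N) = c/2 * N := by field_simp
  linarith [h6, hN4, h7.le, h7.ge]

set_option maxHeartbeats 1000000 in
/-- combined bound: hypergeometric pair at deviated point is at most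
`choose M NN * exp(-t²/((1-α) Nfull))`. -/
lemma twoBound (M NN K a Nfull : ℕ) (t αr u v : ℝ)
    (hM : 0 < M) (hKM : K ≤ M) (hNM : NN ≤ M) (haK : a ≤ K) (haN : a ≤ NN)
    (ht : 20 ≤ t) (hdev : (NN:ℝ) * K / M + t < a)
    (hu_eq : u = (NN:ℝ) * K / M) (hv_eq : v = (M:ℝ) - K - NN + u)
    (hα0 : 0 < αr) (hα1 : αr < 1) (hαM : αr * (M:ℝ) = (Nfull:ℝ)) (hNf : 0 < (Nfull:ℝ))
    (hsm : t + 2 ≤ (1 - αr) * (Nfull:ℝ) / 100)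
    (hu0 : 0 ≤ u) (hv0 : 0 ≤ v)
    (huv : u * v ≤ (Nfull:ℝ) * ((M:ℝ) - Nfull) / 4) (hsum : u + v ≤ (M:ℝ)) :
    ((K.choose a * (M - K).choose (NN - a) : ℕ) : ℝ) ≤
      (M.choose NN : ℝ) * Real.exp (-(t^2 / ((1 - αr) * (Nfull:ℝ)))) := by
  have h1 := oneBound M NN K a t hM hKM hNM haK haN ht hdev
  have he1 : (NN:ℝ) * K / M + t + 2 = u + t + 2 := by rw [hu_eq]
  have he2 : (M:ℝ) - K - NN + ((NN:ℝ) * K / M + t + 2) = v + t + 2 := by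
    rw [hv_eq, hu_eq]; ring
  rw [he2, he1] at h1
  have h2 := numericBound M Nfull t u v αr hα0 hα1 hαM hNf ht hsm hu0 hv0 huv hsum
  refine le_trans h1 ?_
  apply mul_le_mul_of_nonneg_left _ (Nat.cast_nonneg _)
  rw [Real.exp_le_exp]
  have hd2 : (0:ℝ) < 2 * (u + t + 2) * (v + t + 2) := by positivity
  rw [neg_div, neg_le_neg_iff] at *
  calc t^2 / ((1 - αr) * (Nfull:ℝ)) ≤
      (M:ℝ) * (t - 1) * (t - 2) / (2 * (u + t + 2) * (v + t + 2)) := h2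
    _ = ((M:ℝ) * (t - 1) * (t - 2)) / (2 * (u + t + 2) * (v + t + 2)) := by ring

lemma PF_eq {r : ℕ} (M : ℕ) (n K : Fin r → ℕ) (h : ∀ i, n i ≤ K i)
    (hNM : (∑ i, n i) ≤ M) :
    PF M n K = ((∏ i, (K i).choose (n i) : ℕ) : ℝ) / ((M.choose (∑ i, n i) : ℝ)) := by
  have hM : ((M.choose (∑ i, n i) : ℕ) : ℝ) =
      (M.factorial : ℝ) / (((∑ i, n i).factorial : ℝ) * ((M - ∑ i, n i).factorial : ℝ)) :=
    Nat.cast_choose ℝ hNM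
  have hprod : ((∏ i, (K i).choose (n i) : ℕ) : ℝ) =
      ∏ i, (((K i).factorial : ℝ) / (((n i).factorial : ℝ) * (((K i - n i).factorial : ℝ)))) := by
    rw [Nat.cast_prod]
    exact Finset.prod_congr rfl fun i _ => Nat.cast_choose ℝ (h i)
  rw [PF, hM, hprod]
  simp only [Finset.prod_div_distrib, Finset.prod_mul_distrib]
  have h1 : (∏ i, ((n i).factorial : ℝ)) ≠ 0 := by
    apply Finset.prod_ne_zero_iff.2
    intro i _
    exact_mod_cast (Nat.factorial_pos _).ne'
  have h2 : (∏ i, (((K i - n i)).factorial : ℝ)) ≠ 0 := by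
    apply Finset.prod_ne_zero_iff.2
    intro i _
    exact_mod_cast (Nat.factorial_pos _).ne'
  have h3 : ((M.factorial : ℕ) : ℝ) ≠ 0 := by exact_mod_cast (Nat.factorial_pos _).ne'
  have h4 : (((∑ i, n i).factorial : ℕ) : ℝ) ≠ 0 := by exact_mod_cast (Nat.factorial_pos _).ne'
  have h5 : (((M - ∑ i, n i).factorial : ℕ) : ℝ) ≠ 0 := by exact_mod_cast (Nat.factorial_pos _).ne'
  field_simp

set_option maxHeartbeats 2000000 in
/-- Tail bound for fermions at fixed density `α = N/M < 1`: any count vector violating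
the central-region condition `|nᵢ - N qᵢ| ≤ A N^(2/3-ε)` for some `i` has
average probability at most `C N^(5/2) exp(-A² N^(1/3-2ε)/(1-α))`. -/
theorem tail_bound_fermions
    (r : ℕ) (hr : 2 ≤ r) (q : Fin r → ℚ)
    (hq0 : ∀ i, 0 < q i) (hq1 : ∀ i, q i < 1) (hqsum : ∑ i, q i = 1)
    (α : ℚ) (hα0 : 0 < α) (hα1 : α < 1)
    (A ε : ℝ) (hA : 0 < A) (hε0 : 0 < ε) (hε1 : ε < 1 / 6) :
    ∃ C > 0, ∃ N₀ : ℕ, ∀ N : ℕ, N₀ ≤ N → ∀ M : ℕ, α * M = N →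
      ∀ K : Fin r → ℕ, (∀ i, (K i : ℚ) = q i * M) →
      ∀ n : Fin r → ℕ, ∑ i, n i = N → (∀ i, n i ≤ K i) →
      (∃ i, A * (N : ℝ) ^ ((2 : ℝ) / 3 - ε) < |(n i : ℝ) - (N : ℝ) * (q i : ℝ)|) →
      PF M n K ≤ C * (N : ℝ) ^ ((5 : ℝ) / 2) *
        Real.exp (-(A ^ 2) * (N : ℝ) ^ ((1 : ℝ) / 3 - 2 * ε) / (1 - (α : ℝ))) := by
  have hαr0 : 0 < ((α:ℚ):ℝ) := by exact_mod_cast hα0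
  have hαr1 : ((α:ℚ):ℝ) < 1 := by exact_mod_cast hα1
  have hcpos : 0 < (1 - ((α:ℚ):ℝ)) / 100 := by linarith
  obtain ⟨N₀, hN₀⟩ := Filter.eventually_atTop.1
    (eventuallyCond A ε ((1 - ((α:ℚ):ℝ))/100) hA hε0 hε1 hcpos)
  refine ⟨1, one_pos, N₀, ?_⟩
  intro N hNN₀ M hαM K hK n hsum hnK hdev
  obtain ⟨hN1, hT20, hTsm'⟩ := hN₀ N hNN₀
  have hNr : (0:ℝ) < N := by exact_mod_cast hN1
  have hTsm : A * (N:ℝ)^((2:ℝ)/3 - ε) + 2 ≤ (1 - ((α:ℚ):ℝ)) * N / 100 := by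
    calc A * (N:ℝ)^((2:ℝ)/3 - ε) + 2 ≤ (1 - ((α:ℚ):ℝ))/100 * N := hTsm'
      _ = (1 - ((α:ℚ):ℝ)) * N / 100 := by ring
  have hM0 : 0 < M := by
    rcases Nat.eq_zero_or_pos M with h | h
    · exfalso
      rw [h] at hαM
      push_cast at hαM
      rw [mul_zero] at hαM
      have : N = 0 := by exact_mod_cast hαM.symm
      omega
    · exact h
  have hMr : (0:ℝ) < M := by exact_mod_cast hM0
  have hMQ : (0:ℚ) < M := by exact_mod_cast hM0
  have hNM : N < M := by
    have : (N:ℚ) < M := by rw [← hαM]; nlinarith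
    exact_mod_cast this
  have hNMle : N ≤ M := le_of_lt hNM
  have hsumK : ∑ i, K i = M := by
    have hq : ((∑ i, K i : ℕ) : ℚ) = ((M : ℕ) : ℚ) := by
      push_cast
      rw [Finset.sum_congr rfl (fun i _ => hK i), ← Finset.sum_mul, hqsum, one_mul]
    exact_mod_cast hq
  have hαMr : ((α:ℚ):ℝ) * M = N := by exact_mod_cast hαM
  obtain ⟨j, hj⟩ := hdev
  have hqr0 : 0 < ((q j : ℚ):ℝ) := by exact_mod_cast hq0 j
  have hqr1 : ((q j : ℚ):ℝ) < 1 := by exact_mod_cast hq1 j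
  have hKjM : K j ≤ M := by
    rw [← hsumK]
    exact Finset.single_le_sum (f := K) (fun i _ => Nat.zero_le _) (mem_univ j)
  have hnjN : n j ≤ N := by
    rw [← hsum]
    exact Finset.single_le_sum (f := n) (fun i _ => Nat.zero_le _) (mem_univ j)
  have hKjr : ((K j : ℕ) : ℝ) = ((q j : ℚ):ℝ) * M := by
    have h2 : (((K j : ℕ) : ℚ) : ℝ) = (((q j * M) : ℚ) : ℝ) := by rw [hK j]
    push_cast at h2
    exact_mod_cast h2
  have hμ1 : (N:ℝ) * (K j) / M = (N:ℝ) * ((q j : ℚ):ℝ) := by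
    rw [hKjr]
    field_simp
  have hPFeq : PF M n K = ((∏ i, (K i).choose (n i) : ℕ) : ℝ) / ((M.choose N : ℝ)) := by
    rw [PF_eq M n K hnK (hsum ▸ hNMle), hsum]
  have hCMN : (0:ℝ) < (M.choose N : ℝ) := by
    exact_mod_cast Nat.choose_pos hNMle
  have hprodle : (∏ i, (K i).choose (n i)) ≤ (K j).choose (n j) * ((M - K j).choose (N - n j)) := by
    have hsplit : ∏ i, (K i).choose (n i) =
        (K j).choose (n j) * ∏ i ∈ univ.erase j, (K i).choose (n i) :=
      (Finset.mul_prod_erase univ _ (mem_univ j)).symm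
    have hKsum : ∑ i ∈ univ.erase j, K i = M - K j := by
      have := Finset.add_sum_erase univ K (mem_univ j)
      omega
    have hnsum : ∑ i ∈ univ.erase j, n i = N - n j := by
      have := Finset.add_sum_erase univ n (mem_univ j)
      omega
    rw [hsplit]
    apply Nat.mul_le_mul_left
    have := vanderProd (univ.erase j) K n
    rwa [hKsum, hnsum] at this
  have hprodler : ((∏ i, (K i).choose (n i) : ℕ) : ℝ) ≤
      (((K j).choose (n j) * ((M - K j).choose (N - n j)) : ℕ) : ℝ) := by exact_mod_cast hprodle
  -- target exponent identity
  have hT : -((A * (N:ℝ)^((2:ℝ)/3 - ε))^2 / ((1 - ((α:ℚ):ℝ)) * N)) =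
      -(A ^ 2) * (N : ℝ) ^ ((1 : ℝ) / 3 - 2 * ε) / (1 - ((α:ℚ):ℝ)) := by
    have e2 : (N:ℝ)^(((2:ℝ)/3 - ε) + ((2:ℝ)/3 - ε)) = (N:ℝ)^((2:ℝ)/3 - ε) * (N:ℝ)^((2:ℝ)/3 - ε) :=
      Real.rpow_add hNr _ _
    have e3 : (N:ℝ)^(((2:ℝ)/3 - ε) + ((2:ℝ)/3 - ε)) = (N:ℝ)^((1:ℝ)/3 - 2*ε) * (N:ℝ) := by
      rw [show ((2:ℝ)/3 - ε) + ((2:ℝ)/3 - ε) = ((1:ℝ)/3 - 2*ε) + 1 by ring,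
        Real.rpow_add hNr, Real.rpow_one]
    have e4 : (A * (N:ℝ)^((2:ℝ)/3 - ε))^2 = A^2 * ((N:ℝ)^((1:ℝ)/3 - 2*ε) * (N:ℝ)) := by
      rw [mul_pow, sq ((N:ℝ)^((2:ℝ)/3 - ε)), ← e2, e3]
    have hαne : (1:ℝ) - ((α:ℚ):ℝ) ≠ 0 := by linarith
    have hNne : (N:ℝ) ≠ 0 := ne_of_gt hNr
    rw [e4]
    field_simp
  have hexp_nn : (0:ℝ) ≤ Real.exp (-(A ^ 2) * (N : ℝ) ^ ((1 : ℝ) / 3 - 2 * ε) / (1 - ((α:ℚ):ℝ))) :=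
    Real.exp_nonneg _
  have hN52 : (1:ℝ) ≤ (N:ℝ) ^ ((5:ℝ)/2) := by
    have h0 : (N:ℝ)^(0:ℝ) ≤ (N:ℝ)^((5:ℝ)/2) :=
      Real.rpow_le_rpow_of_exponent_le (by exact_mod_cast hN1) (by norm_num)
    rwa [Real.rpow_zero] at h0
  have hsuff : PF M n K ≤ Real.exp (-(A ^ 2) * (N : ℝ) ^ ((1 : ℝ) / 3 - 2 * ε) / (1 - ((α:ℚ):ℝ))) →
      PF M n K ≤ 1 * (N : ℝ) ^ ((5 : ℝ) / 2) *
        Real.exp (-(A ^ 2) * (N : ℝ) ^ ((1 : ℝ) / 3 - 2 * ε) / (1 - ((α:ℚ):ℝ))) := by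
    intro hX
    calc PF M n K ≤ Real.exp (-(A ^ 2) * (N : ℝ) ^ ((1 : ℝ) / 3 - 2 * ε) / (1 - ((α:ℚ):ℝ))) := hX
      _ = 1 * 1 * Real.exp (-(A ^ 2) * (N : ℝ) ^ ((1 : ℝ) / 3 - 2 * ε) / (1 - ((α:ℚ):ℝ))) := by
          ring
      _ ≤ 1 * (N : ℝ) ^ ((5 : ℝ) / 2) *
          Real.exp (-(A ^ 2) * (N : ℝ) ^ ((1 : ℝ) / 3 - 2 * ε) / (1 - ((α:ℚ):ℝ))) := by
          apply mul_le_mul_of_nonneg_right _ hexp_nn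
          nlinarith
  apply hsuff
  rw [abs_sub_comm, lt_abs] at hj
  have hq14 : ((q j : ℚ):ℝ) * (1 - ((q j : ℚ):ℝ)) ≤ 1/4 := by
    nlinarith [sq_nonneg (1 - 2*((q j : ℚ):ℝ))]
  have hMNr : (0:ℝ) ≤ (M:ℝ) - N := by
    have : (N:ℝ) ≤ M := by exact_mod_cast hNMle
    linarith
  rcases hj with hdown | hup
  · -- lower deviation: n j < N q - t; complement case
    have hlow : ((n j):ℝ) + (A * (N:ℝ)^((2:ℝ)/3 - ε)) < (N:ℝ) * ((q j : ℚ):ℝ) := by linarith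
    by_cases h2 : N - n j ≤ M - K j
    · have haK : n j ≤ K j := hnK j
      have ha'N' : K j - n j ≤ M - N := by omega
      have hNMN : ((M - N : ℕ):ℝ) = (M:ℝ) - N := by
        rw [Nat.cast_sub hNMle]
      have hdev' : ((M - N : ℕ):ℝ) * (K j) / M + (A * (N:ℝ)^((2:ℝ)/3 - ε)) < ((K j - n j : ℕ):ℝ) := by
        rw [hNMN, Nat.cast_sub haK, hKjr]
        have hexp1 : ((M:ℝ) - N) * (((q j : ℚ):ℝ) * M) / M = ((q j : ℚ):ℝ) * M - ((q j : ℚ):ℝ) * N := by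
          field_simp
        rw [hexp1]
        nlinarith [hlow]
      have h2B := twoBound M (M - N) (K j) (K j - n j) N (A * (N:ℝ)^((2:ℝ)/3 - ε)) ((α:ℚ):ℝ)
        (((M - N : ℕ):ℝ) * (K j) / M) ((M:ℝ) - (K j) - ((M - N:ℕ):ℝ) + ((M - N : ℕ):ℝ) * (K j) / M)
        hM0 hKjM (by omega) (by omega) ha'N' hT20 hdev' rfl rfl hαr0 hαr1 hαMr hNr hTsm
        (by rw [hNMN, hKjr]; positivity)
        (by rw [hNMN, hKjr]; have : ((M:ℝ) - N) * (((q j:ℚ):ℝ) * M) / M = ((q j:ℚ):ℝ) * ((M:ℝ) - N) := by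
              field_simp
            rw [this]; nlinarith)
        (by rw [hNMN, hKjr]
            have e5 : ((M:ℝ) - N) * (((q j:ℚ):ℝ) * M) / M = ((q j:ℚ):ℝ) * ((M:ℝ) - N) := by
              field_simp
            rw [e5]
            have e6 : (M:ℝ) - ((q j:ℚ):ℝ) * M - ((M:ℝ) - N) + ((q j:ℚ):ℝ) * ((M:ℝ) - N) =
                (1 - ((q j:ℚ):ℝ)) * N := by ring
            rw [e6]
            nlinarith [mul_le_mul_of_nonneg_right hq14 (mul_nonneg hNr.le hMNr)])
        (by rw [hNMN, hKjr]
            have e5 : ((M:ℝ) - N) * (((q j:ℚ):ℝ) * M) / M = ((q j:ℚ):ℝ) * ((M:ℝ) - N) := by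
              field_simp
            rw [e5]
            nlinarith)
      -- symmetry rewrites
      have hc1 : (K j).choose (K j - n j) = (K j).choose (n j) := Nat.choose_symm haK
      have hc2 : (M - K j).choose ((M - N) - (K j - n j)) = (M - K j).choose (N - n j) := by
        rw [(by omega : (M - N) - (K j - n j) = (M - K j) - (N - n j))]
        exact Nat.choose_symm h2
      have hc3 : M.choose (M - N) = M.choose N := Nat.choose_symm hNMle
      rw [hc1, hc2, hc3] at h2B
      rw [hPFeq, div_le_iff₀ hCMN, mul_comm]
      refine le_trans hprodler (le_trans h2B ?_)
      apply mul_le_mul_of_nonneg_left _ (Nat.cast_nonneg _)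
      rw [hT]
    · push_neg at h2
      have hz : (M - K j).choose (N - n j) = 0 := Nat.choose_eq_zero_of_lt h2
      have hzero : (∏ i, (K i).choose (n i)) = 0 := by
        have := hprodle
        rw [hz, Nat.mul_zero] at this
        omega
      rw [hPFeq, hzero]
      simp only [Nat.cast_zero, zero_div]
      exact Real.exp_nonneg _
  · -- upper deviation
    have hup' : (A * (N:ℝ)^((2:ℝ)/3 - ε)) < ((n j) : ℝ) - (N:ℝ) * ((q j : ℚ):ℝ) := by
      have he : -((N:ℝ) * ((q j : ℚ):ℝ) - ((n j):ℝ)) = ((n j):ℝ) - (N:ℝ) * ((q j : ℚ):ℝ) := by ring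
      rwa [he] at hup
    have hdev1 : (N:ℝ) * (K j) / M + (A * (N:ℝ)^((2:ℝ)/3 - ε)) < ((n j : ℕ):ℝ) := by
      rw [hμ1]
      linarith
    have h2B := twoBound M N (K j) (n j) N (A * (N:ℝ)^((2:ℝ)/3 - ε)) ((α:ℚ):ℝ)
      ((N:ℝ) * (K j) / M) ((M:ℝ) - (K j) - (N:ℝ) + (N:ℝ) * (K j) / M)
      hM0 hKjM hNMle (hnK j) hnjN hT20 hdev1 rfl rfl hαr0 hαr1 hαMr hNr hTsm
      (by positivity)
      (by rw [hμ1, hKjr]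
          have e6 : (M:ℝ) - ((q j:ℚ):ℝ) * M - N + (N:ℝ) * ((q j:ℚ):ℝ) =
              (1 - ((q j:ℚ):ℝ)) * ((M:ℝ) - N) := by ring
          rw [e6]
          nlinarith)
      (by rw [hμ1, hKjr]
          have e6 : (M:ℝ) - ((q j:ℚ):ℝ) * M - N + (N:ℝ) * ((q j:ℚ):ℝ) =
              (1 - ((q j:ℚ):ℝ)) * ((M:ℝ) - N) := by ring
          rw [e6]
          nlinarith [mul_le_mul_of_nonneg_right hq14 (mul_nonneg hNr.le hMNr)])
      (by rw [hμ1, hKjr]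
          nlinarith)
    rw [hPFeq, div_le_iff₀ hCMN, mul_comm]
    refine le_trans hprodler (le_trans h2B ?_)
    apply mul_le_mul_of_nonneg_left _ (Nat.cast_nonneg _)
    rw [hT]
end

section
/- Let r ≥ 2, let K : Fin r → ℕ with K_i ≥ 1 for all i and M = ∑_i K_i, and let n : Fin r → ℕ with N = ∑_i n_i. For 1 ≤ l ≤ r−1 set N_l = N − ∑_{i<l} n_i and M_l = M − ∑_{i<l} K_i. Then the bosonic counting probability factorizes into a product of binary (two-bin) bosonic probabilities: P^B(n_1,…,n_r | K_1,…,K_r) = ∏_{l=1}^{r−1} P^B(n_l, N_l−n_l | K_l, M_l−K_l), i.e. (N!/∏_i n_i!)·((M−1)!/(M+N−1)!)·∏_i (K_i+n_i−1)!/(K_i−1)! = ∏_{l=1}^{r−1} [ (N_l!/(n_l!(N_l−n_l)!)) · ((M_l−1)!/(M_l+N_l−1)!) · ((K_l+n_l−1)!/(K_l−1)!) · ((M_l−K_l+N_l−n_l−1)!/(M_l−K_l−1)!) ]. -/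
open Finset

private lemma bosonic_aux (s : ℕ) :
    ∀ (K : ℕ → ℕ) (M : ℕ), M = ∑ i ∈ range (s + 2), K i →
    ∀ (n : ℕ → ℕ) (N : ℕ), N = ∑ i ∈ range (s + 2), n i →
    (N.factorial : ℝ) / (∏ i ∈ range (s + 2), ((n i).factorial : ℝ)) *
        (((M - 1).factorial : ℝ) / ((M + N - 1).factorial : ℝ)) *
        ∏ i ∈ range (s + 2), ((K i + n i - 1).factorial : ℝ) / ((K i - 1).factorial : ℝ)
    = ∏ l ∈ range (s + 1),
        (((N - ∑ i ∈ range l, n i).factorial : ℝ) /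
            (((n l).factorial : ℝ) * (((N - ∑ i ∈ range l, n i) - n l).factorial : ℝ)) *
          ((((M - ∑ i ∈ range l, K i) - 1).factorial : ℝ) /
            (((M - ∑ i ∈ range l, K i) + (N - ∑ i ∈ range l, n i) - 1).factorial : ℝ)) *
          (((K l + n l - 1).factorial : ℝ) / ((K l - 1).factorial : ℝ)) *
          ((((M - ∑ i ∈ range l, K i) - K l + ((N - ∑ i ∈ range l, n i) - n l) - 1).factorial : ℝ) /
            (((M - ∑ i ∈ range l, K i) - K l - 1).factorial : ℝ))) := by
  induction s with
  | zero =>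
    intro K M hM n N hN
    subst hM hN
    simp [Finset.sum_range_succ, Finset.prod_range_succ]
    ring
  | succ s ih =>
    intro K M hM n N hN
    have hM' : M = (∑ i ∈ range (s + 2), K (i + 1)) + K 0 := by
      rw [hM, Finset.sum_range_succ']
    have hN' : N = (∑ i ∈ range (s + 2), n (i + 1)) + n 0 := by
      rw [hN, Finset.sum_range_succ']
    set M' := ∑ i ∈ range (s + 2), K (i + 1) with hM'def
    set N' := ∑ i ∈ range (s + 2), n (i + 1) with hN'def
    have ihs := ih (fun i => K (i + 1)) M' rfl (fun i => n (i + 1)) N' rfl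
    beta_reduce at ihs
    -- split RHS product
    conv_rhs => rw [Finset.prod_range_succ']
    have hT : ∀ l ∈ range (s + 1),
        (((N - ∑ i ∈ range (l + 1), n i).factorial : ℝ) /
            (((n (l + 1)).factorial : ℝ) * (((N - ∑ i ∈ range (l + 1), n i) - n (l + 1)).factorial : ℝ)) *
          ((((M - ∑ i ∈ range (l + 1), K i) - 1).factorial : ℝ) /
            (((M - ∑ i ∈ range (l + 1), K i) + (N - ∑ i ∈ range (l + 1), n i) - 1).factorial : ℝ)) *
          (((K (l + 1) + n (l + 1) - 1).factorial : ℝ) / ((K (l + 1) - 1).factorial : ℝ)) *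
          ((((M - ∑ i ∈ range (l + 1), K i) - K (l + 1) + ((N - ∑ i ∈ range (l + 1), n i) - n (l + 1)) - 1).factorial : ℝ) /
            (((M - ∑ i ∈ range (l + 1), K i) - K (l + 1) - 1).factorial : ℝ)))
        =
        (((N' - ∑ i ∈ range l, n (i + 1)).factorial : ℝ) /
            (((n (l + 1)).factorial : ℝ) * (((N' - ∑ i ∈ range l, n (i + 1)) - n (l + 1)).factorial : ℝ)) *
          ((((M' - ∑ i ∈ range l, K (i + 1)) - 1).factorial : ℝ) /
            (((M' - ∑ i ∈ range l, K (i + 1)) + (N' - ∑ i ∈ range l, n (i + 1)) - 1).factorial : ℝ)) *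
          (((K (l + 1) + n (l + 1) - 1).factorial : ℝ) / ((K (l + 1) - 1).factorial : ℝ)) *
          ((((M' - ∑ i ∈ range l, K (i + 1)) - K (l + 1) + ((N' - ∑ i ∈ range l, n (i + 1)) - n (l + 1)) - 1).factorial : ℝ) /
            (((M' - ∑ i ∈ range l, K (i + 1)) - K (l + 1) - 1).factorial : ℝ))) := by
      intro l _
      have h1 : N - ∑ i ∈ range (l + 1), n i = N' - ∑ i ∈ range l, n (i + 1) := by
        rw [hN', Finset.sum_range_succ', Nat.add_sub_add_right]
      have h2 : M - ∑ i ∈ range (l + 1), K i = M' - ∑ i ∈ range l, K (i + 1) := by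
        rw [hM', Finset.sum_range_succ', Nat.add_sub_add_right]
      rw [h1, h2]
    rw [Finset.prod_congr rfl hT, ← ihs]
    -- now the single-step identity
    rw [Finset.prod_range_succ' (fun i => ((n i).factorial : ℝ)),
        Finset.prod_range_succ' (fun i => ((K i + n i - 1).factorial : ℝ) / ((K i - 1).factorial : ℝ))]
    simp only [Finset.sum_range_zero, Nat.sub_zero]
    have e1 : N - n 0 = N' := by omega
    have e2 : M - K 0 = M' := by omega
    rw [e1, e2]
    have f1 : ((N'.factorial : ℝ)) ≠ 0 := Nat.cast_ne_zero.2 (Nat.factorial_ne_zero _)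
    have f2 : (((M' - 1).factorial : ℝ)) ≠ 0 := Nat.cast_ne_zero.2 (Nat.factorial_ne_zero _)
    have f3 : (((M' + N' - 1).factorial : ℝ)) ≠ 0 := Nat.cast_ne_zero.2 (Nat.factorial_ne_zero _)
    have f4 : (((n 0).factorial : ℝ)) ≠ 0 := Nat.cast_ne_zero.2 (Nat.factorial_ne_zero _)
    have f5 : (∏ i ∈ range (s + 2), ((n (i + 1)).factorial : ℝ)) ≠ 0 := by positivity
    field_simp


/-- Factorization of the bosonic counting probability into a layered product of
binary (two-bin) bosonic probabilities: with `N_l = N - ∑_{i<l} nᵢ` and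
`M_l = M - ∑_{i<l} Kᵢ` (0-based layers `l = 0, …, r-2`),
`P^B(n₁,…,n_r | K₁,…,K_r) = ∏_l P^B(n_l, N_l-n_l | K_l, M_l-K_l)`. -/
theorem bosonic_factorization
    (r : ℕ) (hr : 2 ≤ r) (K : ℕ → ℕ) (hK : ∀ i < r, 1 ≤ K i)
    (M : ℕ) (hM : M = ∑ i ∈ range r, K i)
    (n : ℕ → ℕ) (N : ℕ) (hN : N = ∑ i ∈ range r, n i) :
    (N.factorial : ℝ) / (∏ i ∈ range r, ((n i).factorial : ℝ)) *
        (((M - 1).factorial : ℝ) / ((M + N - 1).factorial : ℝ)) *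
        ∏ i ∈ range r, ((K i + n i - 1).factorial : ℝ) / ((K i - 1).factorial : ℝ)
    = ∏ l ∈ range (r - 1),
        (((N - ∑ i ∈ range l, n i).factorial : ℝ) /
            (((n l).factorial : ℝ) * (((N - ∑ i ∈ range l, n i) - n l).factorial : ℝ)) *
          ((((M - ∑ i ∈ range l, K i) - 1).factorial : ℝ) /
            (((M - ∑ i ∈ range l, K i) + (N - ∑ i ∈ range l, n i) - 1).factorial : ℝ)) *
          (((K l + n l - 1).factorial : ℝ) / ((K l - 1).factorial : ℝ)) *
          ((((M - ∑ i ∈ range l, K i) - K l + ((N - ∑ i ∈ range l, n i) - n l) - 1).factorial : ℝ) /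
            (((M - ∑ i ∈ range l, K i) - K l - 1).factorial : ℝ))) := by
  obtain ⟨s, rfl⟩ : ∃ s, r = s + 2 := ⟨r - 2, by omega⟩
  have := bosonic_aux s K M hM n N hN
  simpa using this
end

section
/- Let r ≥ 2, let K : Fin r → ℕ with K_i ≥ 1 for all i and M = ∑_i K_i, and let n : Fin r → ℕ with n_i ≤ K_i for all i and N = ∑_i n_i. For 1 ≤ l ≤ r−1 set N_l = N − ∑_{i<l} n_i and M_l = M − ∑_{i<l} K_i. Then the fermionic counting probability factorizes into a product of binary (two-bin) fermionic probabilities: P^F(n_1,…,n_r | K_1,…,K_r) = ∏_{l=1}^{r−1} P^F(n_l, N_l−n_l | K_l, M_l−K_l), i.e. (N!/∏_i n_i!)·((M−N)!/M!)·∏_i K_i!/(K_i−n_i)! = ∏_{l=1}^{r−1} [ (N_l!/(n_l!(N_l−n_l)!)) · ((M_l−N_l)!/M_l!) · (K_l!/(K_l−n_l)!) · ((M_l−K_l)!/(M_l−K_l−N_l+n_l)!) ]. -/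
/-!
Layers are indexed from `0`. With the tail sums `N_l = ∑_{i ≥ l} nᵢ` and `M_l = ∑_{i ≥ l} Kᵢ`,
the `l`-th binary factor is `C(K_l, n_l) · C(M_{l+1}, N_{l+1}) / C(M_l, N_l)`, so the product
over the layers telescopes to `∏ᵢ C(Kᵢ, nᵢ) / C(M, N)`, the multivariate probability. The layer
`l = r - 1` left out of the product is the trivial split `P^F(n, 0 | K, 0) = 1`. Written with
factorial quotients instead of binomials, all these identities hold even where `ℕ`-subtraction
truncates.
-/

open Finset
open scoped Nat

/-- `N! (M - N)! / M!`, which is `(M.choose N)⁻¹` when `N ≤ M`. -/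
noncomputable def invChoose (M N : ℕ) : ℝ := (N ! * (M - N)! : ℝ) / M !

/-- The binary fermionic probability `P^F(n, N - n | K, M - K)`. -/
noncomputable def binaryFermionic (N M n K : ℕ) : ℝ :=
  (N ! : ℝ) / (n ! * (N - n)!) * ((M - N)! / M !) * (K ! / (K - n)!) *
    ((M - K)! / (M - K - (N - n))!)

theorem invChoose_ne_zero (M N : ℕ) : invChoose M N ≠ 0 := by
  unfold invChoose; positivity

@[simp]
theorem invChoose_zero_zero : invChoose 0 0 = 1 := by
  simp [invChoose]

theorem prod_range_div_succ₀ {G₀ : Type*} [CommGroupWithZero G₀] (f : ℕ → G₀)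
    (hf : ∀ i, f i ≠ 0) (n : ℕ) : ∏ i ∈ range n, f i / f (i + 1) = f 0 / f n := by
  induction n with
  | zero => simp [hf 0]
  | succ n ih => rw [prod_range_succ, ih, div_mul_div_cancel₀ (hf n)]

theorem fermionic_eq_invChoose_mul_prod {ι : Type*} (s : Finset ι) (K n : ι → ℕ) (M N : ℕ) :
    (N ! : ℝ) / (∏ i ∈ s, ((n i)! : ℝ)) * ((M - N)! / M !) * ∏ i ∈ s, ((K i)! : ℝ) / (K i - n i)!
      = invChoose M N * ∏ i ∈ s, (invChoose (K i) (n i))⁻¹ := by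
  simp only [invChoose, inv_div, div_mul_eq_div_div_swap, prod_div_distrib]
  ring

theorem binaryFermionic_eq (N M n K : ℕ) :
    binaryFermionic N M n K
      = (invChoose K n)⁻¹ * (invChoose M N / invChoose (M - K) (N - n)) := by
  unfold binaryFermionic invChoose
  field_simp

theorem binaryFermionic_self (n K : ℕ) : binaryFermionic n K n K = 1 := by
  rw [binaryFermionic_eq, Nat.sub_self, Nat.sub_self, invChoose_zero_zero, div_one,
    inv_mul_cancel₀ (invChoose_ne_zero K n)]

theorem fermionic_factorization_general
    (r : ℕ) (K : ℕ → ℕ)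
    (M : ℕ) (hM : M = ∑ i ∈ range r, K i)
    (n : ℕ → ℕ)
    (N : ℕ) (hN : N = ∑ i ∈ range r, n i) :
    (N.factorial : ℝ) / (∏ i ∈ range r, ((n i).factorial : ℝ)) *
        (((M - N).factorial : ℝ) / (M.factorial : ℝ)) *
        ∏ i ∈ range r, ((K i).factorial : ℝ) / ((K i - n i).factorial : ℝ)
    = ∏ l ∈ range (r - 1),
        (((N - ∑ i ∈ range l, n i).factorial : ℝ) /
            (((n l).factorial : ℝ) * (((N - ∑ i ∈ range l, n i) - n l).factorial : ℝ)) *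
          ((((M - ∑ i ∈ range l, K i) - (N - ∑ i ∈ range l, n i)).factorial : ℝ) /
            ((M - ∑ i ∈ range l, K i).factorial : ℝ)) *
          (((K l).factorial : ℝ) / ((K l - n l).factorial : ℝ)) *
          ((((M - ∑ i ∈ range l, K i) - K l).factorial : ℝ) /
            ((((M - ∑ i ∈ range l, K i) - K l) -
              ((N - ∑ i ∈ range l, n i) - n l)).factorial : ℝ))) := by
  set f : ℕ → ℝ := fun l ↦ invChoose (M - ∑ i ∈ range l, K i) (N - ∑ i ∈ range l, n i)
  have layer (l : ℕ) :
      binaryFermionic (N - ∑ i ∈ range l, n i) (M - ∑ i ∈ range l, K i) (n l) (K l)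
        = (invChoose (K l) (n l))⁻¹ * (f l / f (l + 1)) := by
    rw [binaryFermionic_eq, tsub_tsub, tsub_tsub, ← sum_range_succ, ← sum_range_succ]
  have all_layers :
      ∏ l ∈ range r, binaryFermionic (N - ∑ i ∈ range l, n i) (M - ∑ i ∈ range l, K i) (n l) (K l)
        = invChoose M N * ∏ l ∈ range r, (invChoose (K l) (n l))⁻¹ := by
    simp_rw [layer, prod_mul_distrib, prod_range_div_succ₀ f (fun l ↦ invChoose_ne_zero _ _)]
    simp only [f, range_zero, sum_empty, tsub_zero, ← hM, ← hN, tsub_self, invChoose_zero_zero,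
      div_one, mul_comm]
  change _ = ∏ l ∈ range (r - 1),
    binaryFermionic (N - ∑ i ∈ range l, n i) (M - ∑ i ∈ range l, K i) (n l) (K l)
  rw [fermionic_eq_invChoose_mul_prod, ← all_layers]
  rcases r with _ | r
  · rfl
  · have last_layer :
        binaryFermionic (N - ∑ i ∈ range r, n i) (M - ∑ i ∈ range r, K i) (n r) (K r) = 1 := by
      rw [hN, hM, sum_range_succ, sum_range_succ K, add_tsub_cancel_left, add_tsub_cancel_left,
        binaryFermionic_self]
    rw [Nat.add_sub_cancel, prod_range_succ, last_layer, mul_one]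

/-- Factorization of the fermionic counting probability into a layered product of
binary (two-bin) fermionic probabilities: with `N_l = N - ∑_{i<l} nᵢ` and
`M_l = M - ∑_{i<l} Kᵢ` (0-based layers `l = 0, …, r-2`),
`P^F(n₁,…,n_r | K₁,…,K_r) = ∏_l P^F(n_l, N_l-n_l | K_l, M_l-K_l)`. -/
theorem fermionic_factorization
    (r : ℕ) (hr : 2 ≤ r) (K : ℕ → ℕ) (hK : ∀ i < r, 1 ≤ K i)
    (M : ℕ) (hM : M = ∑ i ∈ range r, K i)
    (n : ℕ → ℕ) (hnK : ∀ i < r, n i ≤ K i)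
    (N : ℕ) (hN : N = ∑ i ∈ range r, n i) :
    (N.factorial : ℝ) / (∏ i ∈ range r, ((n i).factorial : ℝ)) *
        (((M - N).factorial : ℝ) / (M.factorial : ℝ)) *
        ∏ i ∈ range r, ((K i).factorial : ℝ) / ((K i - n i).factorial : ℝ)
    = ∏ l ∈ range (r - 1),
        (((N - ∑ i ∈ range l, n i).factorial : ℝ) /
            (((n l).factorial : ℝ) * (((N - ∑ i ∈ range l, n i) - n l).factorial : ℝ)) *
          ((((M - ∑ i ∈ range l, K i) - (N - ∑ i ∈ range l, n i)).factorial : ℝ) /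
            ((M - ∑ i ∈ range l, K i).factorial : ℝ)) *
          (((K l).factorial : ℝ) / ((K l - n l).factorial : ℝ)) *
          ((((M - ∑ i ∈ range l, K i) - K l).factorial : ℝ) /
            ((((M - ∑ i ∈ range l, K i) - K l) -
              ((N - ∑ i ∈ range l, n i) - n l)).factorial : ℝ))) :=
  fermionic_factorization_general r K M hM n N hN
end

section
/- Let 0 < x < 1, 0 < q < 1 and α > 0, and set X = (q + α·x)/(1 + α). Then K₂(x|q) − (1 + 1/α)·K₂(X|q) = K₂(x|X) + (1/α)·K₂(q|X). -/
/-- The binary Kullback–Leibler divergence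
`K₂(x|q) = x·ln(x/q) + (1-x)·ln((1-x)/(1-q))`
(with the convention `0·ln 0 = 0`, realized by `Real.log 0 = 0`). -/
noncomputable def K2 (x q : ℝ) : ℝ :=
  x * Real.log (x / q) + (1 - x) * Real.log ((1 - x) / (1 - q))

/-! Changing the reference point of `K₂(a|·)` from `c` to `b` costs a term that is affine in `a`.
Applied at `a = x, X, q` with `X` the weighted mean `(q + α x)/(1 + α)`, the affine terms cancel. -/

open Real

lemma mul_log_div_eq_add (a : ℝ) {b c : ℝ} (hb : b ≠ 0) (hc : c ≠ 0) :
    a * log (a / c) = a * log (a / b) + a * log (b / c) := by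
  rcases eq_or_ne a 0 with rfl | ha
  · simp
  · rw [← mul_add, ← log_mul (div_ne_zero ha hb) (div_ne_zero hb hc), div_mul_div_cancel₀ hb]

lemma K2_eq_K2_add (a : ℝ) {b c : ℝ} (hb : b ≠ 0) (hb' : 1 - b ≠ 0) (hc : c ≠ 0)
    (hc' : 1 - c ≠ 0) :
    K2 a c = K2 a b + (a * log (b / c) + (1 - a) * log ((1 - b) / (1 - c))) := by
  rw [K2, K2, mul_log_div_eq_add a hb hc, mul_log_div_eq_add (1 - a) hb' hc']
  ring

lemma K2_self (a : ℝ) : K2 a a = 0 := by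
  rcases eq_or_ne a 0 with rfl | ha
  · simp [K2]
  rcases eq_or_ne (1 - a) 0 with ha' | ha'
  · simp [K2, ha']
  · simp [K2, div_self ha, div_self ha']

/-- Decomposition of the combination of Kullback–Leibler divergences appearing in
the bosonic tail estimate: with `X = (q + α·x)/(1 + α)`,
`K₂(x|q) - (1 + 1/α)·K₂(X|q) = K₂(x|X) + (1/α)·K₂(q|X)`. -/
theorem KL_bosonic_decomposition
    (x q α : ℝ) (hx0 : 0 < x) (hx1 : x < 1) (hq0 : 0 < q) (hq1 : q < 1) (hα : 0 < α)
    (X : ℝ) (hX : X = (q + α * x) / (1 + α)) :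
    K2 x q - (1 + 1 / α) * K2 X q = K2 x X + (1 / α) * K2 q X := by
  have hmean : (1 + α) * X = q + α * x := by
    rw [hX]; field_simp
  have hX0 : X ≠ 0 := by nlinarith
  have hX1 : 1 - X ≠ 0 := by nlinarith
  have hq : q ≠ 0 := hq0.ne'
  have hq' : 1 - q ≠ 0 := by linarith
  have h_x := K2_eq_K2_add x hX0 hX1 hq hq'
  have h_X := K2_eq_K2_add X hX0 hX1 hq hq'
  have h_q := K2_eq_K2_add q hX0 hX1 hq hq'
  rw [K2_self] at h_X h_q
  rw [h_x, h_X, eq_neg_of_add_eq_zero_left h_q.symm]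
  field_simp
  linear_combination (log ((1 - X) / (1 - q)) - log (X / q)) * hmean
end

section
/- For all natural numbers n ≥ 1 and real m ≥ 1, the following explicit two-sided bound holds: (1 + n/m)^{n+m} · (1 + 1/m)^{−(m+1)} · e^{1−n} ≤ ∏_{l=1}^{n} (1 + l/m) ≤ (1 + n/m)^{n+m+1} · (1 + 1/m)^{−(m+1)} · e^{1−n}. -/
/-! Since `x ↦ log (1 + x / m)` is increasing, comparing `∑_{l=1}^n log (1 + l / m)` with
`∫_1^n log (1 + x / m) dx = (n + m) log (1 + n / m) - (m + 1) log (1 + 1 / m) - n + 1`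
places the sum between this integral plus `log (1 + 1 / m) ≥ 0` and this integral plus
`log (1 + n / m)`. Exponentiating gives both bounds. -/

open Finset Real

theorem integral_log_one_add_div (a b : ℝ) {m : ℝ} (hm : m ≠ 0) :
    ∫ x in a..b, log (1 + x / m) =
      (m + b) * log (1 + b / m) - (m + a) * log (1 + a / m) - b + a := by
  rw [intervalIntegral.integral_comp_add_div (fun x => log x) hm, integral_log, smul_eq_mul]
  field_simp
  ring

section SumIntegral

variable {f : ℝ → ℝ} {a b : ℕ}

theorem MonotoneOn.sum_Icc_le_integral_add (hab : a ≤ b) (hf : MonotoneOn f (Set.Icc a b)) :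
    ∑ i ∈ Icc a b, f i ≤ (∫ x in a..b, f x) + f b := by
  rw [Icc_eq_cons_Ico hab, sum_cons, add_comm]
  exact add_le_add_left (hf.sum_le_integral_Ico hab) _

theorem MonotoneOn.integral_add_le_sum_Icc (hab : a ≤ b) (hf : MonotoneOn f (Set.Icc a b)) :
    (∫ x in a..b, f x) + f a ≤ ∑ i ∈ Icc a b, f i := by
  rw [Icc_eq_cons_Ioc hab, sum_cons, add_comm, ← Ico_add_one_add_one_eq_Ioc, ← sum_Ico_add']
  exact add_le_add_right (hf.integral_le_sum_Ico hab) _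

end SumIntegral

/-- Explicit two-sided bound for `∏_{l=1}^n (1 + l/m)`, obtained by comparing
`∑_{l=1}^n ln(1 + l/m)` with `∫_1^n ln(1 + x/m) dx`:
`(1+n/m)^{n+m}·(1+1/m)^{-(m+1)}·e^{1-n} ≤ ∏_{l=1}^n (1+l/m)
  ≤ (1+n/m)^{n+m+1}·(1+1/m)^{-(m+1)}·e^{1-n}`. -/
theorem prod_one_add_div_bounds
    (n : ℕ) (hn : 1 ≤ n) (m : ℝ) (hm : 1 ≤ m) :
    (1 + (n : ℝ) / m) ^ ((n : ℝ) + m) * (1 + 1 / m) ^ (-(m + 1)) *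
        Real.exp (1 - (n : ℝ)) ≤ ∏ l ∈ Icc 1 n, (1 + (l : ℝ) / m) ∧
    ∏ l ∈ Icc 1 n, (1 + (l : ℝ) / m) ≤
      (1 + (n : ℝ) / m) ^ ((n : ℝ) + m + 1) * (1 + 1 / m) ^ (-(m + 1)) *
        Real.exp (1 - (n : ℝ)) := by
  have hm₀ : 0 < m := by linarith
  have hmono : MonotoneOn (fun x => log (1 + x / m)) (Set.Icc (1 : ℕ) n) :=
    fun x hx y _ hxy => log_le_log (by have := hx.1; push_cast at this; positivity) (by gcongr)
  have hlow := hmono.integral_add_le_sum_Icc hn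
  have hup := hmono.sum_Icc_le_integral_add hn
  simp only [Nat.cast_one, integral_log_one_add_div _ _ hm₀.ne'] at hlow hup
  have hlog₁ : 0 ≤ log (1 + 1 / m) := log_nonneg (by simp [hm₀.le])
  have hprod : ∏ l ∈ Icc 1 n, (1 + (l : ℝ) / m) = exp (∑ l ∈ Icc 1 n, log (1 + (l : ℝ) / m)) := by
    rw [exp_sum]
    exact prod_congr rfl fun l _ => (exp_log (by positivity)).symm
  have hn₀ : 0 < 1 + (n : ℝ) / m := by positivity
  have h₁ : 0 < 1 + 1 / m := by positivity
  simp only [hprod, rpow_def_of_pos hn₀, rpow_def_of_pos h₁, ← exp_add, exp_le_exp]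
  constructor <;> linarith
end

section
/- For all natural numbers n, m with 1 ≤ n ≤ m − 1, the following explicit two-sided bound holds: (1 − n/m)^{n−m+1} · (1 − 1/m)^{m−1} · e^{1−n} ≤ ∏_{l=1}^{n} (1 − l/m) ≤ (1 − n/m)^{n−m} · (1 − 1/m)^{m−1} · e^{1−n}. -/
/-!
Write `f x = log (1 - x / m)`, so that the product is `exp (∑_{l=1}^n f l)`. Since `f` decreases
on `[1, n]`, the sum lies between `∫_1^n f + f n` and `∫_1^n f + f 1`, and the integral is explicit:
`(x - m) log (1 - x / m) - x` is an antiderivative of `f`. The lower bound is then exact, and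
the upper one follows after dropping `f 1 = log (1 - 1 / m) ≤ 0`.
-/

open Finset Real

namespace AntitoneOn

variable {f : ℝ → ℝ} {a b : ℕ}

theorem integral_add_le_sum_Icc (hab : a ≤ b) (hf : AntitoneOn f (Set.Icc (a : ℝ) b)) :
    (∫ x in (a : ℝ)..b, f x) + f b ≤ ∑ l ∈ Icc a b, f l := by
  rw [← Ico_add_one_right_eq_Icc, sum_Ico_succ_top hab]
  exact add_le_add_left (hf.integral_le_sum_Ico hab) _

theorem sum_Icc_le_integral_add (hab : a ≤ b) (hf : AntitoneOn f (Set.Icc (a : ℝ) b)) :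
    ∑ l ∈ Icc a b, f l ≤ (∫ x in (a : ℝ)..b, f x) + f a := by
  rw [← Ico_add_one_right_eq_Icc, sum_eq_sum_Ico_succ_bot (by omega), ← sum_Ico_add' (c := 1),
    add_comm (f a)]
  exact add_le_add_left (hf.sum_le_integral_Ico hab) _

end AntitoneOn

namespace Real

theorem hasDerivAt_sub_mul_log_one_sub_div {c x : ℝ} (hc : c ≠ 0) (hx : x ≠ c) :
    HasDerivAt (fun x => (x - c) * log (1 - x / c) - x) (log (1 - x / c)) x := by
  have hxc : 1 - x / c ≠ 0 := by
    rwa [sub_ne_zero, ne_comm, ne_eq, div_eq_one_iff_eq hc]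
  have hlog : HasDerivAt (fun x => log (1 - x / c)) (-(1 / c) / (1 - x / c)) x := by
    simpa using (((hasDerivAt_id x).div_const c).const_sub 1).log hxc
  refine ((((hasDerivAt_id' x).sub_const c).mul hlog).sub (hasDerivAt_id' x)).congr_deriv ?_
  have : c - x ≠ 0 := sub_ne_zero.2 (Ne.symm hx)
  field_simp
  ring

theorem integral_log_one_sub_div {a b c : ℝ} (hc : c ≠ 0) (habc : c ∉ Set.uIcc a b) :
    ∫ x in a..b, log (1 - x / c) =
      ((b - c) * log (1 - b / c) - b) - ((a - c) * log (1 - a / c) - a) := by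
  have hne : ∀ x ∈ Set.uIcc a b, x ≠ c := fun x hx h => habc (h ▸ hx)
  refine intervalIntegral.integral_eq_sub_of_hasDerivAt
    (fun x hx => hasDerivAt_sub_mul_log_one_sub_div hc (hne x hx)) ?_
  refine (ContinuousOn.log (by fun_prop) fun x hx => ?_).intervalIntegrable
  rw [sub_ne_zero, ne_comm, ne_eq, div_eq_one_iff_eq hc]
  exact hne x hx

theorem antitoneOn_log_one_sub_div {c : ℝ} (hc : 0 < c) :
    AntitoneOn (fun x => log (1 - x / c)) (Set.Iio c) := by
  intro x _ y hy hxy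
  have : 0 < 1 - y / c := by rw [sub_pos, div_lt_one hc]; exact hy
  exact log_le_log this (by gcongr)

end Real

/-- Explicit two-sided bound for `∏_{l=1}^n (1 - l/m)` for naturals `1 ≤ n ≤ m-1`,
obtained by comparing `∑_{l=1}^n ln(1 - l/m)` with `∫_1^n ln(1 - x/m) dx`:
`(1-n/m)^{n-m+1}·(1-1/m)^{m-1}·e^{1-n} ≤ ∏_{l=1}^n (1-l/m)
  ≤ (1-n/m)^{n-m}·(1-1/m)^{m-1}·e^{1-n}`. -/
theorem prod_one_sub_div_bounds
    (n m : ℕ) (hn : 1 ≤ n) (hnm : n ≤ m - 1) :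
    (1 - (n : ℝ) / (m : ℝ)) ^ ((n : ℝ) - (m : ℝ) + 1) *
        (1 - 1 / (m : ℝ)) ^ ((m : ℝ) - 1) * Real.exp (1 - (n : ℝ)) ≤
      ∏ l ∈ Icc 1 n, (1 - (l : ℝ) / (m : ℝ)) ∧
    ∏ l ∈ Icc 1 n, (1 - (l : ℝ) / (m : ℝ)) ≤
      (1 - (n : ℝ) / (m : ℝ)) ^ ((n : ℝ) - (m : ℝ)) *
        (1 - 1 / (m : ℝ)) ^ ((m : ℝ) - 1) * Real.exp (1 - (n : ℝ)) := by
  have hnm' : (n : ℝ) < m := by exact_mod_cast (by omega : n < m)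
  have h1n : (1 : ℝ) ≤ n := by exact_mod_cast hn
  have hm : (0 : ℝ) < m := by linarith
  have hpos {x : ℝ} (hx : x ≤ n) : 0 < 1 - x / m := by
    rw [sub_pos, div_lt_one hm]; linarith
  set f : ℝ → ℝ := fun x => log (1 - x / m)
  have hanti : AntitoneOn f (Set.Icc (1 : ℕ) n) :=
    (antitoneOn_log_one_sub_div hm).mono fun x hx => hx.2.trans_lt hnm'
  have hint : ∫ x in (1 : ℝ)..n, f x =
      ((n - m) * f n - n) - ((1 - m) * f 1 - 1) :=
    integral_log_one_sub_div hm.ne' fun h => by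
      rw [Set.uIcc_of_le h1n] at h; linarith [h.2]
  have hlower := hanti.integral_add_le_sum_Icc hn
  have hupper := hanti.sum_Icc_le_integral_add hn
  have hf1 : f 1 ≤ 0 := log_nonpos (hpos h1n).le (by simp only [sub_le_self_iff]; positivity)
  have hprod : ∏ l ∈ Icc 1 n, (1 - (l : ℝ) / m) = exp (∑ l ∈ Icc 1 n, f l) := by
    rw [exp_sum]
    exact prod_congr rfl fun l hl => (exp_log (hpos (by exact_mod_cast (mem_Icc.1 hl).2))).symm
  simp only [hprod, rpow_def_of_pos (hpos le_rfl), rpow_def_of_pos (hpos h1n), ← exp_add,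
    exp_le_exp]
  push_cast at hlower hupper
  constructor <;> linarith
end

section
/- Fix a rational α > 0 and set γ = ln(1/α) + (1 + 1/α)·ln(1 + α), which is strictly positive. Then there exist C > 0 and N₀ ∈ ℕ such that for all natural numbers N ≥ N₀ and M ≥ 1 with α·M = N, the average bosonic single-configuration probability p = N!·(M−1)!/(M+N−1)! satisfies | p · e^{γN} / √(2πN(1+α)) − 1 | ≤ C/N; in particular p is exponentially small in N. -/
open Real Filter

noncomputable def Estir (n : ℕ) : ℝ :=
  Real.log (n.factorial) - ((n : ℝ) + 1/2) * Real.log n + n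

noncomputable def Lstir : ℝ := Real.log (Real.sqrt (2*Real.pi))

lemma taylor_log (u : ℝ) (hu0 : 0 < u) (hu : u ≤ 1/2) :
    |Real.log (1+u) - (u - u^2/2 + u^3/3)| ≤ 2*u^4 := by
  have h := Real.abs_log_sub_add_sum_range_le (x := -u)
    (by rw [abs_neg, abs_of_pos hu0]; linarith) 3
  rw [abs_neg, abs_of_pos hu0] at h
  have h2 : (∑ i ∈ Finset.range 3, (-u) ^ (i + 1) / ((i:ℝ) + 1)) = -(u - u^2/2 + u^3/3) := by
    simp [Finset.sum_range_succ]; ring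
  rw [h2, sub_neg_eq_add] at h
  rw [show Real.log (1+u) - (u - u^2/2 + u^3/3)
      = -(u - u^2/2 + u^3/3) + Real.log (1+u) from by ring]
  refine h.trans ?_
  rw [div_le_iff₀ (by linarith)]
  have : u ^ (3+1) = u ^ 4 := rfl
  nlinarith [pow_pos hu0 4]

lemma estir_step (n : ℕ) (hn : 2 ≤ n) :
    |Estir n - Estir (n+1)| ≤ 6 * (1/(n:ℝ) - 1/((n:ℝ)+1)) := by
  have hn0 : (0:ℝ) < n := by positivity
  have hdiff : Estir n - Estir (n+1) = ((n:ℝ) + 1/2) * Real.log (1 + 1/(n:ℝ)) - 1 := by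
    have hfac : ((n+1).factorial : ℝ) = ((n:ℝ)+1) * (n.factorial : ℝ) := by
      rw [Nat.factorial_succ]; push_cast; ring
    have hlog : Real.log ((n+1).factorial) = Real.log ((n:ℝ)+1) + Real.log (n.factorial) := by
      rw [hfac, Real.log_mul (by positivity) (by exact_mod_cast (Nat.factorial_pos n).ne')]
    have hlog2 : Real.log (1 + 1/(n:ℝ)) = Real.log ((n:ℝ)+1) - Real.log n := by
      rw [← Real.log_div (by positivity) hn0.ne']
      congr 1; field_simp
    simp only [Estir, hlog, hlog2]
    push_cast
    ring
  rw [hdiff]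
  have hu0 : (0:ℝ) < 1/(n:ℝ) := by positivity
  have hu : 1/(n:ℝ) ≤ 1/2 := by
    rw [div_le_div_iff₀ hn0 (by norm_num)]; exact_mod_cast by linarith
  have ht := taylor_log (1/(n:ℝ)) hu0 hu
  set u : ℝ := 1/(n:ℝ) with hudef
  have hpoly : ((n:ℝ) + 1/2) * (u - u^2/2 + u^3/3) - 1 = 1/(12*(n:ℝ)^2) + 1/(6*(n:ℝ)^3) := by
    rw [hudef]; field_simp; ring
  have h1 : |((n:ℝ) + 1/2) * Real.log (1+u) - 1|
      ≤ ((n:ℝ) + 1/2) * (2*u^4) + (1/(12*(n:ℝ)^2) + 1/(6*(n:ℝ)^3)) := by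
    have heq : ((n:ℝ) + 1/2) * Real.log (1+u) - 1
        = ((n:ℝ) + 1/2) * (Real.log (1+u) - (u - u^2/2 + u^3/3))
          + (((n:ℝ) + 1/2) * (u - u^2/2 + u^3/3) - 1) := by ring
    rw [heq, hpoly]
    refine (abs_add_le _ _).trans (add_le_add ?_ ?_)
    · rw [abs_mul, abs_of_pos (by positivity : (0:ℝ) < (n:ℝ) + 1/2)]
      gcongr
    · rw [abs_of_pos (by positivity)]
  refine h1.trans ?_
  have h2 : ((n:ℝ) + 1/2) * (2*u^4) = (2*(n:ℝ)+1)/(n:ℝ)^4 := by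
    rw [hudef]; field_simp
  rw [h2]
  have hn2 : (2:ℝ) ≤ n := by exact_mod_cast hn
  rw [← sub_nonneg]
  have e : 6 * (1/(n:ℝ) - 1/((n:ℝ)+1)) - ((2*(n:ℝ)+1)/(n:ℝ)^4 + (1/(12*(n:ℝ)^2) + 1/(6*(n:ℝ)^3)))
      = (71*(n:ℝ)^3 - 27*(n:ℝ)^2 - 38*(n:ℝ) - 12) / (12*(n:ℝ)^4*((n:ℝ)+1)) := by
    field_simp
    ring
  rw [hudef, e]
  apply div_nonneg _ (by positivity)
  nlinarith [sq_nonneg ((n:ℝ)-2)]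

lemma estir_tele (n : ℕ) (hn : 2 ≤ n) : ∀ m, n ≤ m → |Estir n - Estir m| ≤ 6 * (1/(n:ℝ) - 1/(m:ℝ)) := by
  refine Nat.le_induction ?_ ?_
  · simp
  · intro m hm ih
    have h2m : 2 ≤ m := le_trans hn hm
    have := estir_step m h2m
    have habs : |Estir n - Estir (m+1)| ≤ |Estir n - Estir m| + |Estir m - Estir (m+1)| := by
      calc |Estir n - Estir (m+1)| = |(Estir n - Estir m) + (Estir m - Estir (m+1))| := by ring_nf
        _ ≤ _ := abs_add_le _ _
    refine habs.trans ?_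
    push_cast
    linarith

lemma estir_tendsto : Tendsto Estir atTop (nhds Lstir) := by
  have hlim : Tendsto (fun n => Real.log (Stirling.stirlingSeq n) + Real.log (Real.sqrt 2))
      atTop (nhds (Real.log (Real.sqrt Real.pi) + Real.log (Real.sqrt 2))) := by
    exact (((Real.continuousAt_log (Real.sqrt_pos.2 Real.pi_pos).ne').tendsto.comp
      Stirling.tendsto_stirlingSeq_sqrt_pi).add tendsto_const_nhds)
  have heq : ∀ᶠ n : ℕ in atTop, Real.log (Stirling.stirlingSeq n) + Real.log (Real.sqrt 2) = Estir n := by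
    filter_upwards [eventually_ge_atTop 1] with n hn
    have hn0 : (0:ℝ) < n := by exact_mod_cast hn
    rw [Stirling.log_stirlingSeq_formula]
    rw [Real.log_div hn0.ne' (Real.exp_pos 1).ne', Real.log_exp,
      Real.log_mul (by norm_num) hn0.ne', Real.log_sqrt (by norm_num)]
    unfold Estir
    ring
  have hL : Real.log (Real.sqrt Real.pi) + Real.log (Real.sqrt 2) = Lstir := by
    unfold Lstir
    rw [Real.log_sqrt Real.pi_pos.le, Real.log_sqrt (by norm_num), Real.log_sqrt (by positivity),
      Real.log_mul (by norm_num) Real.pi_pos.ne']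
    ring
  rw [← hL]
  exact hlim.congr' heq

lemma estir_close (n : ℕ) (hn : 2 ≤ n) : |Estir n - Lstir| ≤ 6 / (n:ℝ) := by
  have hf : Tendsto (fun m : ℕ => |Estir n - Estir m|) atTop (nhds |Estir n - Lstir|) :=
    ((tendsto_const_nhds.sub estir_tendsto).abs)
  have hg : Tendsto (fun m : ℕ => 6 * (1/(n:ℝ) - 1/(m:ℝ))) atTop (nhds (6 * (1/(n:ℝ) - 0))) :=
    (tendsto_const_nhds.sub tendsto_one_div_atTop_nhds_zero_nat).const_mul 6
  have := le_of_tendsto_of_tendsto hf hg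
    (eventually_atTop.2 ⟨n, fun m hm => estir_tele n hn m hm⟩)
  simpa [div_eq_mul_inv] using this

/-- The exponential decay rate `γ = ln(1/α) + (1 + 1/α)·ln(1 + α)` of the average
bosonic single-configuration probability at density `α = N/M`. -/
noncomputable def gammaRate (α : ℚ) : ℝ :=
  Real.log (1 / (α : ℝ)) + (1 + 1 / (α : ℝ)) * Real.log (1 + (α : ℝ))

set_option maxHeartbeats 1000000 in
/-- The average bosonic single-configuration probability
`p = N!·(M-1)!/(M+N-1)!` at fixed density `α = N/M` satisfies
`p = √(2πN(1+α))·e^(-γN)·(1 + O(1/N))` with `γ = ln(1/α) + (1+1/α)·ln(1+α) > 0`;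
in particular `p` is exponentially small in `N`. -/
theorem bosonic_configuration_probability_asymptotics (α : ℚ) (hα : 0 < α) :
    0 < gammaRate α ∧
    ∃ C > 0, ∃ N₀ : ℕ, ∀ N M : ℕ, N₀ ≤ N → 1 ≤ M → α * M = N →
      |(N.factorial : ℝ) * ((M - 1).factorial : ℝ) / ((M + N - 1).factorial : ℝ) *
          Real.exp (gammaRate α * N) /
          Real.sqrt (2 * Real.pi * N * (1 + (α : ℝ))) - 1| ≤ C / N := by
  have ha : (0:ℝ) < (α:ℝ) := by exact_mod_cast hα
  set a : ℝ := (α:ℝ) with hadef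
  constructor
  · -- positivity of gammaRate
    have h1 : 0 < Real.log (1+a) := Real.log_pos (by linarith)
    have h2 : 0 < Real.log ((1+a)/a) := Real.log_pos (by rw [lt_div_iff₀ ha]; linarith)
    have h3 : Real.log ((1+a)/a) = Real.log (1/a) + Real.log (1+a) := by
      rw [Real.log_div (by linarith) ha.ne', one_div, Real.log_inv]; ring
    have h4 : 0 < (1/a) * Real.log (1+a) := by positivity
    unfold gammaRate
    rw [← hadef]
    nlinarith
  · refine ⟨12*(2+a), by positivity, 2 + ⌈(12*(2+α) + 2*α : ℚ)⌉₊, ?_⟩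
    intro N M hN hM hαM
    -- basic real facts
    set n : ℝ := (N:ℝ) with hndef
    set m : ℝ := (M:ℝ) with hmdef
    have hnm : n = a * m := by
      rw [hndef, hmdef, hadef]
      exact_mod_cast congrArg (fun q : ℚ => (q:ℝ)) hαM.symm
    have hm1 : (1:ℝ) ≤ m := by rw [hmdef]; exact_mod_cast hM
    have hm0 : (0:ℝ) < m := by linarith
    have hnbig : 12*(2+a) + 2*a ≤ n := by
      have h1 : (12*(2+α) + 2*α : ℚ) ≤ (N:ℚ) := by
        calc (12*(2+α) + 2*α : ℚ) ≤ (⌈(12*(2+α) + 2*α : ℚ)⌉₊ : ℚ) := Nat.le_ceil _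
          _ ≤ (N:ℚ) := by exact_mod_cast le_trans (Nat.le_add_left _ 2) hN
      have := (Rat.cast_le (K := ℝ)).2 h1
      push_cast at this
      rw [hndef, hadef]
      linarith
    have hn0 : (0:ℝ) < n := by nlinarith
    have hM2 : 2 ≤ M := by
      have h : (2:ℝ) ≤ m := by nlinarith
      rw [hmdef] at h; exact_mod_cast h
    have hN2 : 2 ≤ N := by
      have h : (2:ℝ) ≤ n := by nlinarith
      rw [hndef] at h; exact_mod_cast h
    have hMN2 : 2 ≤ M + N := le_trans hM2 (Nat.le_add_right _ _)
    have hmn : ((M+N:ℕ):ℝ) = m + n := by push_cast; ring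
    -- the error term
    set S : ℝ := (Estir N - Lstir) + (Estir M - Lstir) - (Estir (M+N) - Lstir) with hSdef
    have hSb : |S| ≤ 6*(2+a)/n := by
      have b1 := estir_close N hN2
      have b2 := estir_close M hM2
      have b3 := estir_close (M+N) hMN2
      rw [hmn] at b3
      rw [← hndef] at b1
      rw [← hmdef] at b2
      have habs : |S| ≤ |Estir N - Lstir| + |Estir M - Lstir| + |Estir (M+N) - Lstir| := by
        rw [hSdef]
        exact (abs_sub _ _).trans (by gcongr; exact abs_add_le _ _)
      have h6m : 6/m = 6*a/n := by rw [hnm]; field_simp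
      have h6mn : 6/(m+n) ≤ 6/n := by apply div_le_div_of_nonneg_left (by norm_num) hn0; linarith
      have : |S| ≤ 6/n + 6*a/n + 6/n := by
        rw [← h6m]; linarith
      calc |S| ≤ 6/n + 6*a/n + 6/n := this
        _ = (6 + 6*a + 6)/n := by ring
        _ ≤ 6*(2+a)/n := by gcongr <;> linarith
    -- positivity of the main expression
    have hfacN : (0:ℝ) < (N.factorial : ℝ) := by exact_mod_cast N.factorial_pos
    have hfacM : (0:ℝ) < ((M-1).factorial : ℝ) := by exact_mod_cast (M-1).factorial_pos
    have hfacMN : (0:ℝ) < ((M+N-1).factorial : ℝ) := by exact_mod_cast (M+N-1).factorial_pos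
    have hsq : (0:ℝ) < 2 * Real.pi * n * (1 + a) :=
      mul_pos (mul_pos (mul_pos two_pos Real.pi_pos) hn0) (by linarith)
    set X : ℝ := (N.factorial : ℝ) * ((M - 1).factorial : ℝ) / ((M + N - 1).factorial : ℝ) *
          Real.exp (gammaRate α * n) / Real.sqrt (2 * Real.pi * n * (1 + a)) with hXdef
    have hXpos : 0 < X := by
      rw [hXdef]
      exact div_pos (mul_pos (div_pos (mul_pos hfacN hfacM) hfacMN) (Real.exp_pos _))
        (Real.sqrt_pos.2 hsq)
    -- log identity
    have l3 : ∀ k : ℕ, Real.log (k.factorial) = Estir k + ((k:ℝ)+1/2) * Real.log k - k := by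
      intro k; unfold Estir; ring
    have f1 : ((M-1).factorial : ℝ) = (M.factorial : ℝ) / m := by
      rw [eq_div_iff hm0.ne', hmdef]
      rw [← Nat.succ_pred_eq_of_pos (show 0 < M by omega)]
      push_cast [Nat.factorial_succ]
      ring
    have f2 : ((M+N-1).factorial : ℝ) = ((M+N).factorial : ℝ) / (m+n) := by
      rw [eq_div_iff (by linarith)]
      rw [← hmn]
      rw [← Nat.succ_pred_eq_of_pos (show 0 < M + N by omega)]
      push_cast [Nat.factorial_succ]
      ring
    have l1 : Real.log ((M-1).factorial) = Real.log (M.factorial) - Real.log m := by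
      rw [f1, Real.log_div (by exact_mod_cast M.factorial_pos.ne') hm0.ne']
    have l2 : Real.log ((M+N-1).factorial) = Real.log ((M+N).factorial) - Real.log (m+n) := by
      rw [f2, Real.log_div (by exact_mod_cast (M+N).factorial_pos.ne') (by linarith)]
    have llogn : Real.log n = Real.log a + Real.log m := by
      rw [hnm, Real.log_mul ha.ne' hm0.ne']
    have llogmn : Real.log (m+n) = Real.log (1+a) + Real.log m := by
      rw [show m + n = (1+a)*m by rw [hnm]; ring, Real.log_mul (by linarith) hm0.ne']
    have lgam : gammaRate α * n = -(n * Real.log a) + (m+n) * Real.log (1+a) := by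
      unfold gammaRate
      rw [← hadef, one_div, Real.log_inv]
      have h : (1+1/a)*n = m+n := by
        rw [hnm]; field_simp; ring
      linear_combination Real.log (1+a) * h
    have lsqrt : Real.log (Real.sqrt (2 * Real.pi * n * (1 + a)))
        = (Real.log (2*Real.pi) + Real.log n + Real.log (1+a))/2 := by
      rw [Real.log_sqrt hsq.le,
        Real.log_mul (by positivity) (by linarith),
        Real.log_mul (by positivity) hn0.ne']
    have lL : Lstir = Real.log (2*Real.pi)/2 := by
      unfold Lstir; rw [Real.log_sqrt (by positivity)]
    have hlogX : Real.log X = S := by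
      rw [hXdef,
        Real.log_div (by positivity) (Real.sqrt_pos.2 hsq).ne',
        Real.log_mul (by positivity) (Real.exp_pos _).ne',
        Real.log_div (by positivity) hfacMN.ne',
        Real.log_mul hfacN.ne' hfacM.ne',
        Real.log_exp, l1, l2, l3 N, l3 M, l3 (M+N),
        hmn, ← hndef, ← hmdef, lsqrt, llogn, llogmn, lgam, hSdef, lL]
      ring
    -- conclusion
    have hS1 : |S| ≤ 1 := by
      refine hSb.trans ?_
      rw [div_le_one hn0]
      nlinarith
    calc |X - 1| = |Real.exp S - 1| := by rw [← hlogX, Real.exp_log hXpos]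
      _ ≤ 2 * |S| := Real.abs_exp_sub_one_le hS1
      _ ≤ 2 * (6*(2+a)/n) := by linarith [hSb, abs_nonneg S]
      _ = 12*(2+a)/n := by ring
end
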